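/- arXiv:1303.4238 — 9 statements merged into one kernel-verified Lean document; each statement's English description precedes it below -/
import Mathlib

section
/- Let X = 𝕋 be the circle group and let α_{ij} (i,j = 1,2,3) be topological automorphisms of 𝕋. Let ξ_1, ξ_2, ξ_3 be independent 𝕋-valued random variables with distributions μ_1, μ_2, μ_3 whose characteristic functions μ̂_i(n) = ∫_𝕋 (x,n) dμ_i(x), n ∈ ℤ, do not vanish anywhere. If the linear forms L_j = Σ_{i=1}^3 α_{ij}ξ_i (j = 1,2,3) are mutually independent, then each μ_i is a degenerate distribution: μ_i = E_{x_i} for some x_i ∈ 𝕋. -/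
/-!
Every topological automorphism of `𝕋` is `x ↦ ±x` (a continuous character of `𝕋` has a nonzero
Fourier coefficient, and translation invariance of Haar measure then forces it to be that Fourier
monomial), so `L_j = ∑ᵢ s_{ij} ξᵢ` with signs `s_{ij}`.
Independence of `L_j` and `L_k` gives, for the even functions `φᵢ = log |μ̂ᵢ| ≤ 0`,
`∑ᵢ φᵢ(n s_{ij} + m s_{ik}) = ∑ᵢ φᵢ(n) + ∑ᵢ φᵢ(m)`. At `n = 1`, `m = ±1` this says that
`∑ᵢ φᵢ(2) = 4 ∑ᵢ φᵢ(1)` and that the signed sums `∑ᵢ s_{ij} s_{ik} φᵢ(2)` vanish. The three sign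
vectors `(s_{ij} s_{ik})ᵢ` are `u`, `v` and `uv`; since three indices miss one of the four
patterns of `(uᵢ, vᵢ)`, this forces `∑ᵢ φᵢ(2) = 0`. Hence every `φᵢ(1) = 0`, i.e. `|μ̂ᵢ(1)| = 1`,
and a measure on the circle whose first Fourier coefficient has modulus one is a point mass.
-/

open MeasureTheory ProbabilityTheory AddCircle

section Fourier

variable {T : ℝ}

theorem fourier_apply_add (n : ℤ) (x y : AddCircle T) :
    fourier n (x + y) = fourier n x * fourier n y := by
  simp only [fourier_apply, smul_add, toCircle_add, Circle.coe_mul]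

theorem fourier_apply_zsmul (n k : ℤ) (x : AddCircle T) :
    fourier n (k • x) = fourier (n * k) x := by
  simp only [fourier_apply, smul_smul]

theorem fourier_apply_sum {ι : Type*} (s : Finset ι) (n : ℤ) (x : ι → AddCircle T) :
    fourier n (∑ i ∈ s, x i) = ∏ i ∈ s, fourier n (x i) := by
  classical
  induction s using Finset.induction_on with
  | empty => simp
  | insert a s ha ih => rw [Finset.sum_insert ha, Finset.prod_insert ha, fourier_apply_add, ih]

variable [hT : Fact (0 < T)]

theorem fourier_one_injective : Function.Injective (fourier 1 : AddCircle T → ℂ) := fun x y h => by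
  simp only [fourier_one] at h
  exact injective_toCircle hT.out.ne' (Circle.coe_injective h)

theorem fourier_injective : Function.Injective (fourier : ℤ → C(AddCircle T, ℂ)) := fun m n h =>
  (orthonormal_fourier (T := T)).linearIndependent.injective (by simp only [fourierLp, h])

theorem AddChar.eq_fourier_of_fourierCoeff_ne_zero (ψ : AddChar (AddCircle T) ℂ) {n : ℤ}
    (hn : fourierCoeff ψ n ≠ 0) : ⇑ψ = fourier n := by
  funext y
  have hshift : fourierCoeff ψ n = fourier (-n) y * ψ y * fourierCoeff ψ n := by
    conv_lhs => rw [fourierCoeff, ← integral_add_left_eq_self _ y]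
    rw [fourierCoeff, ← integral_const_mul]
    congr 1 with t
    simp only [fourier_apply_add, AddChar.map_add_eq_mul, smul_eq_mul]
    ring
  have hy : fourier (-n) y * ψ y = 1 :=
    mul_right_cancel₀ hn (by rw [one_mul]; exact hshift.symm)
  calc ψ y = fourier n y * (fourier (-n) y * ψ y) := by
        rw [← mul_assoc, ← fourier_add, add_neg_cancel, fourier_zero, one_mul]
    _ = fourier n y := by rw [hy, mul_one]

theorem AddChar.exists_fourierCoeff_ne_zero (ψ : AddChar (AddCircle T) ℂ)
    (hψ : Continuous ψ) : ∃ n, fourierCoeff ψ n ≠ 0 := by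
  by_contra! h
  let g : C(AddCircle T, ℂ) := ⟨ψ, hψ⟩
  have hLp : ContinuousMap.toLp 2 haarAddCircle ℂ g = 0 :=
    fourierBasis.repr.injective <| by
      ext n
      rw [fourierBasis_repr, fourierCoeff_toLp, map_zero]
      exact h n
  have hg : g = 0 := ContinuousMap.toLp_injective haarAddCircle (by rw [hLp, map_zero])
  simpa [g] using DFunLike.congr_fun hg 0

theorem AddChar.exists_eq_fourier (ψ : AddChar (AddCircle T) ℂ) (hψ : Continuous ψ) :
    ∃ n, ⇑ψ = fourier n :=
  (ψ.exists_fourierCoeff_ne_zero hψ).imp fun _ => ψ.eq_fourier_of_fourierCoeff_ne_zero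

theorem AddCircle.exists_zsmul_eq_of_continuous (f : AddCircle T →+ AddCircle T)
    (hf : Continuous f) :
    ∃ n : ℤ, ∀ x, f x = n • x := by
  let ψ : AddChar (AddCircle T) ℂ :=
    (Circle.coeHom.compAddChar toCircle_addChar).compAddMonoidHom f
  obtain ⟨n, hn⟩ := ψ.exists_eq_fourier (continuous_subtype_val.comp (continuous_toCircle.comp hf))
  refine ⟨n, fun x => fourier_one_injective ?_⟩
  rw [fourier_one, fourier_one]
  exact congrFun hn x

theorem AddCircle.exists_units_zsmul_eq_of_continuous (e : AddCircle T ≃+ AddCircle T)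
    (he : Continuous e) (he' : Continuous e.symm) : ∃ s : ℤˣ, ∀ x, e x = s • x := by
  obtain ⟨m, hm⟩ := AddCircle.exists_zsmul_eq_of_continuous e.toAddMonoidHom he
  obtain ⟨m', hm'⟩ := AddCircle.exists_zsmul_eq_of_continuous e.symm.toAddMonoidHom he'
  simp only [AddEquiv.coe_toAddMonoidHom] at hm hm'
  have hmm' : m' * m = 1 := fourier_injective <| by
    ext x
    rw [← one_mul (m' * m), ← fourier_apply_zsmul, ← smul_smul, ← hm, ← hm',
      AddEquiv.symm_apply_apply]
  refine ⟨⟨m, m', by rw [mul_comm, hmm'], hmm'⟩, fun x => ?_⟩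
  simpa [Units.smul_def] using hm x

end Fourier

section CharFun

variable {T : ℝ}

noncomputable def circleCharFun (μ : Measure (AddCircle T)) (n : ℤ) : ℂ :=
  ∫ x, fourier n x ∂μ

variable (μ : Measure (AddCircle T))

theorem circleCharFun_zero [IsProbabilityMeasure μ] : circleCharFun μ 0 = 1 := by
  simp [circleCharFun]

theorem circleCharFun_neg (n : ℤ) :
    circleCharFun μ (-n) = starRingEnd ℂ (circleCharFun μ n) := by
  simp_rw [circleCharFun, fourier_neg, integral_conj]

theorem norm_circleCharFun_le_one [IsProbabilityMeasure μ] (n : ℤ) : ‖circleCharFun μ n‖ ≤ 1 := by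
  simpa [circleCharFun] using norm_integral_le_of_norm_le_const (μ := μ) (C := 1)
    (ae_of_all _ fun x => (Circle.norm_coe (toCircle (n • x))).le)

theorem exists_eq_dirac_of_norm_circleCharFun_one_eq_one [Fact (0 < T)] [IsProbabilityMeasure μ]
    (h : ‖circleCharFun μ 1‖ = 1) : ∃ x₀, μ = Measure.dirac x₀ := by
  -- a unimodular function whose mean is unimodular is a.e. constant (strict convexity of `ℂ`)
  have hconst : (fourier 1 : AddCircle T → ℂ) =ᵐ[μ] Function.const _ (⨍ x, fourier 1 x ∂μ) := by
    refine (ae_eq_const_or_norm_integral_lt_of_norm_le_const (C := 1)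
      (ae_of_all _ fun x => (Circle.norm_coe (toCircle (1 • x))).le)).resolve_right ?_
    simpa [circleCharFun] using h.ge
  obtain ⟨x₀, hx₀⟩ := hconst.exists
  have hid : (id : AddCircle T → AddCircle T) =ᵐ[μ] fun _ => x₀ :=
    hconst.mono fun x hx => fourier_one_injective (hx.trans hx₀.symm)
  exact ⟨x₀, by simpa using (hasLaw_dirac_of_ae_eq hid).map_eq⟩

variable {Ω ι : Type*} [MeasurableSpace Ω] {P : Measure Ω} [Fintype ι] {ξ : ι → Ω → AddCircle T}

theorem ProbabilityTheory.iIndepFun.integral_prod_fourier (hindep : iIndepFun ξ P)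
    (hξ : ∀ i, Measurable (ξ i)) (c : ι → ℤ) :
    ∫ ω, ∏ i, fourier (c i) (ξ i ω) ∂P = ∏ i, circleCharFun (P.map (ξ i)) (c i) := by
  rw [hindep.integral_fun_prod_comp (fun i => (hξ i).aemeasurable)
    (fun i => (fourier (c i)).continuous.aestronglyMeasurable)]
  congr with i
  rw [circleCharFun, integral_map (hξ i).aemeasurable (fourier _).continuous.aestronglyMeasurable]

theorem prod_circleCharFun_add_eq (hindep : iIndepFun ξ P) (hξ : ∀ i, Measurable (ξ i))
    {a b : ι → ℤ} (hab : IndepFun (fun ω => ∑ i, a i • ξ i ω) (fun ω => ∑ i, b i • ξ i ω) P)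
    (n m : ℤ) :
    ∏ i, circleCharFun (P.map (ξ i)) (n * a i + m * b i) =
      (∏ i, circleCharFun (P.map (ξ i)) (n * a i)) *
        ∏ i, circleCharFun (P.map (ξ i)) (m * b i) := by
  have hmeas : ∀ c : ι → ℤ, Measurable fun ω => ∑ i, c i • ξ i ω := fun c =>
    Finset.measurable_sum _ fun i _ => (hξ i).const_smul (c i)
  have h := hab.integral_fun_comp_mul_comp (hmeas a).aemeasurable (hmeas b).aemeasurable
    (fourier n).continuous.aestronglyMeasurable (fourier m).continuous.aestronglyMeasurable
  simp only [fourier_apply_sum, fourier_apply_zsmul, ← Finset.prod_mul_distrib,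
    ← fourier_add] at h
  simpa only [hindep.integral_prod_fourier hξ] using h

theorem sum_log_norm_circleCharFun_add_eq (hindep : iIndepFun ξ P) (hξ : ∀ i, Measurable (ξ i))
    (hne : ∀ i n, circleCharFun (P.map (ξ i)) n ≠ 0)
    {a b : ι → ℤ} (hab : IndepFun (fun ω => ∑ i, a i • ξ i ω) (fun ω => ∑ i, b i • ξ i ω) P)
    (n m : ℤ) :
    ∑ i, Real.log ‖circleCharFun (P.map (ξ i)) (n * a i + m * b i)‖ =
      ∑ i, Real.log ‖circleCharFun (P.map (ξ i)) (n * a i)‖ +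
        ∑ i, Real.log ‖circleCharFun (P.map (ξ i)) (m * b i)‖ := by
  have hlog : ∀ c : ι → ℤ, Real.log ‖∏ i, circleCharFun (P.map (ξ i)) (c i)‖ =
      ∑ i, Real.log ‖circleCharFun (P.map (ξ i)) (c i)‖ := fun c => by
    rw [norm_prod, Real.log_prod fun i _ => norm_ne_zero_iff.2 (hne i _)]
  have h := congrArg (fun z => Real.log ‖z‖) (prod_circleCharFun_add_eq hindep hξ hab n m)
  simp only [norm_mul] at h
  have hprod : ∀ c : ι → ℤ, ‖∏ i, circleCharFun (P.map (ξ i)) (c i)‖ ≠ 0 := fun c =>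
    norm_ne_zero_iff.2 (Finset.prod_ne_zero_iff.2 fun i _ => hne i _)
  rwa [Real.log_mul (hprod _) (hprod _), hlog, hlog, hlog] at h

end CharFun

section SignPatterns

variable {ι : Type*} [Fintype ι]

theorem sum_eq_zero_of_sum_units_smul_eq_zero {M : Type*} [AddCommGroup M]
    (hι : Fintype.card ι < 4) (u v : ι → ℤˣ) (x : ι → M) (hu : ∑ i, u i • x i = 0)
    (hv : ∑ i, v i • x i = 0) (huv : ∑ i, (u i * v i) • x i = 0) : ∑ i, x i = 0 := by
  obtain ⟨⟨a, b⟩, hab⟩ : ∃ p : ℤˣ × ℤˣ, ∀ i, (u i, v i) ≠ p := by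
    by_contra! h
    have := Fintype.card_le_of_surjective _ fun p => (h p).imp fun _ => id
    simp [Fintype.card_units_int] at this
    omega
  -- `(1 + a uᵢ)(1 + b vᵢ)` vanishes unless `(uᵢ, vᵢ) = (a, b)`
  have hvanish : ∀ i, ((1 + a * u i) * (1 + b * v i) : ℤ) = 0 := fun i => by
    have hne : u i ≠ a ∨ v i ≠ b := not_and_or.1 fun h => hab i (Prod.ext h.1 h.2)
    rcases hne with h | h <;> rw [Int.units_ne_iff_eq_neg.1 h] <;> simp
  simp only [Units.smul_def, Units.val_mul] at hu hv huv
  calc ∑ i, x i = ∑ i, (x i + (a : ℤ) • (u i : ℤ) • x i + (b : ℤ) • (v i : ℤ) • x i +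
        ((a : ℤ) * b) • ((u i : ℤ) * v i) • x i) := by
        simp only [Finset.sum_add_distrib, ← Finset.smul_sum, hu, hv, huv, smul_zero, add_zero]
    _ = ∑ i, ((1 + a * u i) * (1 + b * v i) : ℤ) • x i := by
        congr with i
        module
    _ = 0 := Finset.sum_eq_zero fun i _ => by rw [hvanish, zero_smul]

section Single

variable {φ : ℤ → ℝ} (h0 : φ 0 = 0) (heven : ∀ n, φ (-n) = φ n)
include heven

theorem apply_units_eq (s : ℤˣ) : φ s = φ 1 := by
  rcases Int.units_eq_one_or s with rfl | rfl
  · rfl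
  · simpa using heven 1

include h0

theorem apply_units_add_add_apply_units_sub (s t : ℤˣ) : φ (s + t) + φ (s - t) = φ 2 := by
  rcases Int.units_eq_one_or s with rfl | rfl <;> rcases Int.units_eq_one_or t with rfl | rfl <;>
    norm_num [h0, ← heven 2]

theorem apply_units_add_sub_apply_units_sub (s t : ℤˣ) :
    φ (s + t) - φ (s - t) = (s * t) • φ 2 := by
  rcases Int.units_eq_one_or s with rfl | rfl <;> rcases Int.units_eq_one_or t with rfl | rfl <;>
    norm_num [h0, ← heven 2, Units.smul_def]

end Single

section PairOfForms

variable {φ : ι → ℤ → ℝ} (h0 : ∀ i, φ i 0 = 0) (heven : ∀ i n, φ i (-n) = φ i n) {u v : ι → ℤˣ}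
  (hfe : ∀ n m : ℤ, ∑ i, φ i (n * u i + m * v i) = ∑ i, φ i (n * u i) + ∑ i, φ i (m * v i))
include heven hfe

theorem sum_apply_add_eq_and_sum_apply_sub_eq :
    ∑ i, φ i (u i + v i) = 2 * ∑ i, φ i 1 ∧ ∑ i, φ i (u i - v i) = 2 * ∑ i, φ i 1 := by
  have hp := hfe 1 1
  have hm := hfe 1 (-1)
  simp only [one_mul, neg_one_mul, heven, apply_units_eq (heven _), ← sub_eq_add_neg] at hp hm
  constructor <;> linarith

include h0

theorem sum_apply_two_eq_four_mul : ∑ i, φ i 2 = 4 * ∑ i, φ i 1 := by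
  obtain ⟨hp, hm⟩ := sum_apply_add_eq_and_sum_apply_sub_eq heven hfe
  calc ∑ i, φ i 2 = ∑ i, (φ i (u i + v i) + φ i (u i - v i)) :=
        Finset.sum_congr rfl fun i _ =>
          (apply_units_add_add_apply_units_sub (h0 i) (heven i) _ _).symm
    _ = 4 * ∑ i, φ i 1 := by rw [Finset.sum_add_distrib, hp, hm]; ring

theorem sum_units_mul_smul_apply_two_eq_zero : ∑ i, (u i * v i) • φ i 2 = 0 := by
  obtain ⟨hp, hm⟩ := sum_apply_add_eq_and_sum_apply_sub_eq heven hfe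
  calc ∑ i, (u i * v i) • φ i 2 = ∑ i, (φ i (u i + v i) - φ i (u i - v i)) :=
        Finset.sum_congr rfl fun i _ =>
          (apply_units_add_sub_apply_units_sub (h0 i) (heven i) _ _).symm
    _ = 0 := by rw [Finset.sum_sub_distrib, hp, hm, sub_self]

end PairOfForms

theorem sum_apply_one_eq_zero_of_three_forms {φ : ι → ℤ → ℝ} (h0 : ∀ i, φ i 0 = 0)
    (heven : ∀ i n, φ i (-n) = φ i n) (hι : Fintype.card ι < 4) (s : ι → Fin 3 → ℤˣ)
    (hfe : ∀ j k, j ≠ k → ∀ n m : ℤ, ∑ i, φ i (n * s i j + m * s i k) =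
      ∑ i, φ i (n * s i j) + ∑ i, φ i (m * s i k)) :
    ∑ i, φ i 1 = 0 := by
  have hsign : ∀ i, s i 0 * s i 1 * (s i 0 * s i 2) = s i 1 * s i 2 := fun i => by
    rw [mul_mul_mul_comm, Int.units_mul_self, one_mul]
  have h2 : ∑ i, φ i 2 = 0 :=
    sum_eq_zero_of_sum_units_smul_eq_zero hι _ _ _
      (sum_units_mul_smul_apply_two_eq_zero h0 heven (hfe 0 1 (by decide)))
      (sum_units_mul_smul_apply_two_eq_zero h0 heven (hfe 0 2 (by decide)))
      (by simpa only [hsign] using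
        sum_units_mul_smul_apply_two_eq_zero h0 heven (hfe 1 2 (by decide)))
  linarith [sum_apply_two_eq_four_mul h0 heven (hfe 0 1 (by decide))]

end SignPatterns

/-- Skitovich–Darmois type theorem on the circle group `𝕋 = ℝ/ℤ` for three
linear forms of three independent random variables: if `ξ_1, ξ_2, ξ_3` are
independent `𝕋`-valued random variables whose characteristic functions
`μ̂_i(n) = ∫ (x, n) dμ_i(x)`, `n ∈ ℤ`, do not vanish, and the linear forms
`L j = ∑ i, α i j (ξ i)` (with `α i j` topological automorphisms of `𝕋`) are
mutually independent, then every distribution `μ i = map (ξ i) P` is degenerate: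
`μ i = E_{x i}` for some `x i ∈ 𝕋`. -/
theorem skitovich_darmois_circle_three_forms
    {Ω : Type} [MeasurableSpace Ω] (P : Measure Ω) [IsProbabilityMeasure P]
    (ξ : Fin 3 → Ω → AddCircle (1 : ℝ)) (hξ : ∀ i, Measurable (ξ i))
    (hindep : iIndepFun ξ P)
    (α : Fin 3 → Fin 3 → (AddCircle (1 : ℝ) ≃+ AddCircle (1 : ℝ)))
    (hα : ∀ i j, Continuous (α i j) ∧ Continuous (α i j).symm)
    (hnv : ∀ i (m : ℤ), ∫ x, fourier m x ∂(Measure.map (ξ i) P) ≠ 0)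
    (hLindep : iIndepFun (fun j ω => ∑ i, α i j (ξ i ω)) P) :
    ∀ i, ∃ x : AddCircle (1 : ℝ), Measure.map (ξ i) P = Measure.dirac x := by
  choose s hs using fun i j =>
    AddCircle.exists_units_zsmul_eq_of_continuous (α i j) (hα i j).1 (hα i j).2
  have hforms : (fun j ω => ∑ i, α i j (ξ i ω)) = fun j ω => ∑ i, (s i j : ℤ) • ξ i ω := by
    simp only [hs, Units.smul_def]
  rw [hforms] at hLindep
  have hprob : ∀ i, IsProbabilityMeasure (P.map (ξ i)) := fun i =>
    Measure.isProbabilityMeasure_map (hξ i).aemeasurable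
  set φ : Fin 3 → ℤ → ℝ := fun i n => Real.log ‖circleCharFun (P.map (ξ i)) n‖
  have hsum : ∑ i, φ i 1 = 0 :=
    sum_apply_one_eq_zero_of_three_forms (fun i => by simp [φ, circleCharFun_zero])
      (fun i n => by simp [φ, circleCharFun_neg]) (by simp) s
      fun j k hjk => sum_log_norm_circleCharFun_add_eq hindep hξ hnv (hLindep.indepFun hjk)
  have hφ : ∀ i, φ i 1 = 0 := fun i =>
    (Finset.sum_eq_zero_iff_of_nonpos fun i _ => Real.log_nonpos (norm_nonneg _)
      (norm_circleCharFun_le_one _ _)).1 hsum i (Finset.mem_univ i)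
  exact fun i => exists_eq_dirac_of_norm_circleCharFun_one_eq_one _
    (Real.eq_one_of_pos_of_log_eq_zero (norm_pos_iff.2 (hnv i 1)) (hφ i))
end

section
/- Let f_1, f_2, f_3 be normalized positive definite functions on ℤ that vanish nowhere, and suppose they satisfy equation (S-D T): f_1(u_1+u_2+u_3)·f_2(u_1−u_2−u_3)·f_3(u_1+u_2−u_3) = f_1(u_1)f_1(u_2)f_1(u_3)·f_2(u_1)f_2(−u_2)f_2(−u_3)·f_3(u_1)f_3(u_2)f_3(−u_3) for all u_1, u_2, u_3 ∈ ℤ. Then each f_i is a character of ℤ: there exist complex numbers z_1, z_2, z_3 with |z_i| = 1 such that f_i(n) = z_i^n for all n ∈ ℤ. -/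
/-!
Positive definiteness gives `f (-t) = conj (f t)` and `‖f t‖ ≤ 1`. Substituting `(u, -u, u)` into
(S-D T) leaves `‖f₁ u‖² ‖f₂ u‖² ‖f₃ u‖² = 1`, so all three functions are unimodular and
`fᵢ (-t) = (fᵢ t)⁻¹`. Comparing (S-D T) at two triples on which two of the functions see the same
arguments (`(u, v, w)` and `(u, w, v)` for `f₃`, `(v, u, w)` for `f₂`, `(-w, v, -u)` for `f₁`)
isolates the third one, and yields the recurrence `fᵢ (n + 1) = fᵢ (n - 1) * fᵢ 1 ^ 2`, whose only
solution with `fᵢ 0 = 1` is `n ↦ fᵢ 1 ^ n`.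
-/

/-- `f : Y → ℂ` is a positive definite function on the abelian group `Y`. -/
def IsPosDefFn {Y : Type*} [AddCommGroup Y] (f : Y → ℂ) : Prop :=
  ∀ (n : ℕ) (y : Fin n → Y) (c : Fin n → ℂ),
    0 ≤ (∑ i, ∑ j, f (y i - y j) * c i * (starRingEnd ℂ) (c j)).re ∧
    (∑ i, ∑ j, f (y i - y j) * c i * (starRingEnd ℂ) (c j)).im = 0

open Complex ComplexConjugate

namespace IsPosDefFn

variable {Y : Type*} [AddCommGroup Y] {f : Y → ℂ}

theorem apply_neg (h : IsPosDefFn f) (t : Y) : f (-t) = conj (f t) := by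
  have h₀ := (h 1 ![0] ![1]).2
  have h₁ := (h 2 ![0, t] ![1, 1]).2
  have h₂ := (h 2 ![0, t] ![1, I]).2
  simp only [Fin.sum_univ_one, Fin.sum_univ_two, Matrix.cons_val_zero, Matrix.cons_val_one,
    Matrix.cons_val_fin_one, sub_self, sub_zero, zero_sub, map_one, conj_I, mul_one, mul_neg,
    add_im, neg_im, mul_im, mul_re, I_re, I_im, mul_zero, add_zero, neg_neg, Complex.ext_iff,
    conj_re, conj_im] at h₀ h₁ h₂ ⊢
  constructor <;> linarith

theorem mul_apply_neg (h : IsPosDefFn f) (t : Y) : f t * f (-t) = (‖f t‖ ^ 2 : ℝ) := by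
  rw [h.apply_neg, mul_conj, normSq_eq_norm_sq]

theorem norm_le_one (h : IsPosDefFn f) (h0 : f 0 = 1) (t : Y) : ‖f t‖ ≤ 1 := by
  have h₁ := (h 2 ![0, t] ![1, -conj (f t)]).1
  simp only [Fin.sum_univ_two, Matrix.cons_val_zero, Matrix.cons_val_one, Matrix.cons_val_fin_one,
    sub_self, sub_zero, zero_sub, h0, h.apply_neg, map_one, map_neg, conj_conj, mul_one, one_mul,
    mul_neg, neg_mul, neg_neg, add_re, one_re, neg_re, mul_re, conj_re, conj_im] at h₁
  rw [← sq_le_one_iff₀ (norm_nonneg _), ← normSq_eq_norm_sq, normSq_apply]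
  linarith

theorem mul_apply_neg_eq_one (h : IsPosDefFn f) {t : Y} (ht : ‖f t‖ = 1) : f t * f (-t) = 1 := by
  rw [h.mul_apply_neg, ht]
  norm_num

end IsPosDefFn

theorem eq_zpow_of_two_step {G₀ : Type*} [CommGroupWithZero G₀] {g : ℤ → G₀} (h0 : g 0 = 1)
    (hrec : ∀ n, g (n + 1) = g (n - 1) * g 1 ^ 2) (n : ℤ) : g n = g 1 ^ n := by
  have hg₁ : g 1 ≠ 0 := by
    intro hz
    simpa [hz, h0] using hrec (-1)
  suffices ∀ n : ℤ, g n = g 1 ^ n ∧ g (n + 1) = g 1 ^ (n + 1) from (this n).1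
  intro n
  induction n using Int.induction_on with
  | zero => simp [h0]
  | succ k ih =>
    refine ⟨ih.2, ?_⟩
    rw [hrec, add_sub_cancel_right, ih.1, zpow_add_one₀ hg₁, zpow_add_one₀ hg₁, sq, mul_assoc]
  | pred k ih =>
    refine ⟨?_, by rw [sub_add_cancel]; exact ih.1⟩
    have h := hrec (-k)
    rw [ih.2] at h
    apply mul_right_cancel₀ (pow_ne_zero 2 hg₁)
    rw [← h, ← zpow_natCast, ← zpow_add₀ hg₁]
    congr 1
    ring

/-- Equation (S-D T). -/
def SkitovichDarmoisEq {Y : Type*} [AddCommGroup Y] (f₁ f₂ f₃ : Y → ℂ) : Prop :=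
  ∀ u₁ u₂ u₃ : Y,
    f₁ (u₁ + u₂ + u₃) * f₂ (u₁ - u₂ - u₃) * f₃ (u₁ + u₂ - u₃) =
      f₁ u₁ * f₁ u₂ * f₁ u₃ * (f₂ u₁ * f₂ (-u₂) * f₂ (-u₃)) * (f₃ u₁ * f₃ u₂ * f₃ (-u₃))

namespace SkitovichDarmoisEq

section AddCommGroup

variable {Y : Type*} [AddCommGroup Y] {f₁ f₂ f₃ : Y → ℂ} (heq : SkitovichDarmoisEq f₁ f₂ f₃)
include heq

theorem prod_mul_apply_neg_eq_one {u : Y} (h₁ : f₁ u ≠ 0) (h₂ : f₂ u ≠ 0) (h₃ : f₃ (-u) ≠ 0) :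
    f₁ u * f₁ (-u) * (f₂ u * f₂ (-u)) * (f₃ u * f₃ (-u)) = 1 := by
  have h := heq u (-u) u
  rw [show u + -u + u = u by abel, show u - -u - u = u by abel, show u + -u - u = -u by abel,
    neg_neg] at h
  apply mul_left_cancel₀ (mul_ne_zero (mul_ne_zero h₁ h₂) h₃)
  linear_combination -h

theorem norm_eq_one (hpd₁ : IsPosDefFn f₁) (hpd₂ : IsPosDefFn f₂) (hpd₃ : IsPosDefFn f₃)
    (hn₁ : f₁ 0 = 1) (hn₂ : f₂ 0 = 1) (hn₃ : f₃ 0 = 1)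
    (hnv₁ : ∀ y, f₁ y ≠ 0) (hnv₂ : ∀ y, f₂ y ≠ 0) (hnv₃ : ∀ y, f₃ y ≠ 0) (u : Y) :
    ‖f₁ u‖ = 1 ∧ ‖f₂ u‖ = 1 ∧ ‖f₃ u‖ = 1 := by
  have h := heq.prod_mul_apply_neg_eq_one (hnv₁ u) (hnv₂ u) (hnv₃ (-u))
  rw [hpd₁.mul_apply_neg, hpd₂.mul_apply_neg, hpd₃.mul_apply_neg] at h
  have hsq : (‖f₁ u‖ * ‖f₂ u‖ * ‖f₃ u‖) ^ 2 = 1 := by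
    rw [mul_pow, mul_pow]; exact_mod_cast h
  have hprod := (pow_eq_one_iff_of_nonneg (by positivity) two_ne_zero).mp hsq
  have h₁ := hpd₁.norm_le_one hn₁ u
  have h₂ := hpd₂.norm_le_one hn₂ u
  have h₃ := hpd₃.norm_le_one hn₃ u
  refine ⟨?_, ?_, ?_⟩ <;> nlinarith [norm_nonneg (f₁ u), norm_nonneg (f₂ u), norm_nonneg (f₃ u),
    mul_le_one₀ h₁ (norm_nonneg _) h₂, mul_le_one₀ h₁ (norm_nonneg _) h₃,
    mul_le_one₀ h₂ (norm_nonneg _) h₃]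

theorem first_ratio (hnv₂ : ∀ y, f₂ y ≠ 0) (hnv₃ : ∀ y, f₃ y ≠ 0) (u v w : Y) :
    f₁ (u + v + w) * f₁ (-u) * f₁ (-w) = f₁ (v - u - w) * f₁ u * f₁ w := by
  have h₁ := heq u v w
  have h₂ := heq (-w) v (-u)
  rw [show -w - v - -u = u - v - w by abel, show -w + v - -u = u + v - w by abel,
    neg_neg, show -w + v + -u = v - u - w by abel] at h₂
  apply mul_left_cancel₀ (mul_ne_zero (hnv₂ (u - v - w)) (hnv₃ (u + v - w)))
  linear_combination f₁ (-u) * f₁ (-w) * h₁ - f₁ u * f₁ w * h₂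

theorem second_ratio (hnv₁ : ∀ y, f₁ y ≠ 0) (hnv₃ : ∀ y, f₃ y ≠ 0) (u v w : Y) :
    f₂ (u - v - w) * f₂ v * f₂ (-u) = f₂ (v - u - w) * f₂ u * f₂ (-v) := by
  have h₁ := heq u v w
  have h₂ := heq v u w
  rw [add_comm v u] at h₂
  apply mul_left_cancel₀ (mul_ne_zero (hnv₁ (u + v + w)) (hnv₃ (u + v - w)))
  linear_combination f₂ v * f₂ (-u) * h₁ - f₂ u * f₂ (-v) * h₂

theorem third_ratio (hnv₁ : ∀ y, f₁ y ≠ 0) (hnv₂ : ∀ y, f₂ y ≠ 0) (u v w : Y) :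
    f₃ (u + v - w) * f₃ w * f₃ (-v) = f₃ (u + w - v) * f₃ v * f₃ (-w) := by
  have h₁ := heq u v w
  have h₂ := heq u w v
  rw [add_right_comm u w v, sub_right_comm u w v] at h₂
  apply mul_left_cancel₀ (mul_ne_zero (hnv₁ (u + v + w)) (hnv₂ (u - v - w)))
  linear_combination f₃ w * f₃ (-v) * h₁ - f₃ v * f₃ (-w) * h₂

end AddCommGroup

section Int

variable {f₁ f₂ f₃ : ℤ → ℂ} (heq : SkitovichDarmoisEq f₁ f₂ f₃)
include heq

theorem first_add_one (hnv₂ : ∀ n, f₂ n ≠ 0) (hnv₃ : ∀ n, f₃ n ≠ 0) (hn₁ : f₁ 0 = 1)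
    (hinv₁ : f₁ 1 * f₁ (-1) = 1) (n : ℤ) : f₁ (n + 1) = f₁ (n - 1) * f₁ 1 ^ 2 := by
  have h := heq.first_ratio hnv₂ hnv₃ 0 n 1
  simp only [zero_add, neg_zero, sub_zero, hn₁, mul_one] at h
  linear_combination f₁ 1 * h - f₁ (n + 1) * hinv₁

theorem second_add_one (hnv₁ : ∀ n, f₁ n ≠ 0) (hnv₃ : ∀ n, f₃ n ≠ 0) (hn₂ : f₂ 0 = 1)
    (hinv₂ : f₂ 1 * f₂ (-1) = 1) (n : ℤ) : f₂ (n + 1) = f₂ (n - 1) * f₂ 1 ^ 2 := by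
  have h := heq.second_ratio hnv₁ hnv₃ 0 1 (-n)
  rw [show (0 : ℤ) - 1 - -n = n - 1 by ring, show (1 : ℤ) - 0 - -n = n + 1 by ring, neg_zero,
    hn₂, mul_one, mul_one] at h
  linear_combination -f₂ 1 * h - f₂ (n + 1) * hinv₂

theorem third_add_one (hnv₁ : ∀ n, f₁ n ≠ 0) (hnv₂ : ∀ n, f₂ n ≠ 0) (hn₃ : f₃ 0 = 1)
    (hinv₃ : f₃ 1 * f₃ (-1) = 1) (n : ℤ) : f₃ (n + 1) = f₃ (n - 1) * f₃ 1 ^ 2 := by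
  have h := heq.third_ratio hnv₁ hnv₂ n 1 0
  simp only [sub_zero, add_zero, neg_zero, hn₃, mul_one] at h
  linear_combination f₃ 1 * h - f₃ (n + 1) * hinv₃

end Int

end SkitovichDarmoisEq

/-- If `f₁, f₂, f₃` are normalized positive definite functions on `ℤ` that vanish
nowhere and satisfy equation (S-D T), then each `f_i` is a character of `ℤ`:
`f_i n = z_i ^ n` for some complex number `z_i` of modulus `1`. -/
theorem skitovich_darmois_equation_on_int
    (f₁ f₂ f₃ : ℤ → ℂ)
    (hpd₁ : IsPosDefFn f₁) (hpd₂ : IsPosDefFn f₂) (hpd₃ : IsPosDefFn f₃)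
    (hn₁ : f₁ 0 = 1) (hn₂ : f₂ 0 = 1) (hn₃ : f₃ 0 = 1)
    (hnv₁ : ∀ n, f₁ n ≠ 0) (hnv₂ : ∀ n, f₂ n ≠ 0) (hnv₃ : ∀ n, f₃ n ≠ 0)
    (heq : ∀ u₁ u₂ u₃ : ℤ,
      f₁ (u₁ + u₂ + u₃) * f₂ (u₁ - u₂ - u₃) * f₃ (u₁ + u₂ - u₃) =
        f₁ u₁ * f₁ u₂ * f₁ u₃ * (f₂ u₁ * f₂ (-u₂) * f₂ (-u₃)) *
          (f₃ u₁ * f₃ u₂ * f₃ (-u₃))) :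
    (∃ z₁ : ℂ, ‖z₁‖ = 1 ∧ ∀ n : ℤ, f₁ n = z₁ ^ n) ∧
    (∃ z₂ : ℂ, ‖z₂‖ = 1 ∧ ∀ n : ℤ, f₂ n = z₂ ^ n) ∧
    (∃ z₃ : ℂ, ‖z₃‖ = 1 ∧ ∀ n : ℤ, f₃ n = z₃ ^ n) := by
  have heq : SkitovichDarmoisEq f₁ f₂ f₃ := heq
  obtain ⟨h₁, h₂, h₃⟩ := heq.norm_eq_one hpd₁ hpd₂ hpd₃ hn₁ hn₂ hn₃ hnv₁ hnv₂ hnv₃ 1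
  refine ⟨⟨f₁ 1, h₁, eq_zpow_of_two_step hn₁ ?_⟩, ⟨f₂ 1, h₂, eq_zpow_of_two_step hn₂ ?_⟩,
    ⟨f₃ 1, h₃, eq_zpow_of_two_step hn₃ ?_⟩⟩
  · exact heq.first_add_one hnv₂ hnv₃ hn₁ (hpd₁.mul_apply_neg_eq_one h₁)
  · exact heq.second_add_one hnv₁ hnv₃ hn₂ (hpd₂.mul_apply_neg_eq_one h₂)
  · exact heq.third_add_one hnv₁ hnv₂ hn₃ (hpd₃.mul_apply_neg_eq_one h₃)
end

section
/- Let Y be a nonzero subgroup of ℚ such that pY ≠ Y for every prime p (this holds exactly when Y is the character group of an a-adic solenoid Σ_a on which no map x ↦ px is a topological automorphism). Let f_1, f_2, f_3 be normalized positive definite functions on Y, and let ε_{ij} ∈ {1, −1} (i,j = 1,2,3) be signs such that Π_{i=1}^3 f_i(Σ_{j=1}^3 ε_{ij}u_j) = Π_{i=1}^3 Π_{j=1}^3 f_i(ε_{ij}u_j) for all u_1, u_2, u_3 ∈ Y. Then at least one of the functions f_i is of idempotent form: there exist a subgroup H of Y and a character χ of Y (a homomorphism from Y to the unit circle in ℂ)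 such that f_i(y) = χ(y) for y ∈ H and f_i(y) = 0 for y ∉ H. -/
/-- `χ : Y → ℂ` is a character of the abelian group `Y`: a homomorphism of `Y`
into the unit circle in `ℂ`. -/
def IsCharFn {Y : Type*} [AddCommGroup Y] (χ : Y → ℂ) : Prop :=
  (∀ a b : Y, χ (a + b) = χ a * χ b) ∧ ∀ a : Y, ‖χ a‖ = 1

/-!
Pass to the moduli `ψᵢ = |fᵢ|²`: they take values in `[0, 1]`, are even, are invariant under
translation by any point where they equal `1`, and satisfy the same equation. If two columns of `ε`
are proportional, a substitution that makes every row sum vanish forces `ψᵢ ≡ 1`. Otherwise a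
change of signs of rows and variables brings the equation to the form
`ψ_a (x + v - w) ψ_b (x - v + w) ψ_c (x - v - w) = Ψ x Ψ v Ψ w` with `Ψ = ψ_a ψ_b ψ_c`.
Then `Ψ` is `{0, 1}`-valued, hence so are the three moduli on `2Y`, and since `2Y` has index at
most two in a subgroup of `ℚ`, the three moduli cannot all take values outside `{0, 1}`.
If `ψᵢ` is `{0, 1}`-valued, `fᵢ` is a character on the subgroup `{ψᵢ = 1}` and vanishes off it;
that character extends to `Y` because the circle group is divisible.
-/

open Set Complex ComplexConjugate Matrix
open scoped ComplexOrder

namespace IsPosDefFn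

variable {G : Type*} [AddCommGroup G] {f : G → ℂ}

theorem map_neg (hf : IsPosDefFn f) (x : G) : f (-x) = conj (f x) := by
  have h0 : (f 0).im = 0 := by simpa using (hf 1 ![0] ![1]).2
  have him : (f x).im + (f (-x)).im = 0 := by
    simpa [Fin.sum_univ_two, h0] using (hf 2 ![x, 0] ![1, 1]).2
  have hre : (f x).re - (f (-x)).re = 0 := by
    simpa [Fin.sum_univ_two, h0, ← sub_eq_add_neg] using (hf 2 ![x, 0] ![I, 1]).2
  apply Complex.ext <;> simp only [conj_re, conj_im] <;> linarith

theorem posSemidef (hf : IsPosDefFn f) {n : ℕ} (y : Fin n → G) :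
    (Matrix.of fun i j => f (y j - y i)).PosSemidef := by
  refine .of_dotProduct_mulVec_nonneg ?_ fun c => ?_
  · ext i j
    simp [← hf.map_neg]
  · have e : star c ⬝ᵥ (Matrix.of (fun i j => f (y j - y i)) *ᵥ c) =
        ∑ i, ∑ j, f (y i - y j) * c i * conj (c j) := by
      simp only [dotProduct, mulVec, of_apply, Finset.mul_sum, Pi.star_apply, RCLike.star_def]
      rw [Finset.sum_comm]
      exact Finset.sum_congr rfl fun _ _ => Finset.sum_congr rfl fun _ _ => by ring
    rw [e, Complex.nonneg_iff]
    exact ⟨(hf n y c).1, (hf n y c).2.symm⟩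

theorem normSq_le_one (hf : IsPosDefFn f) (h0 : f 0 = 1) (x : G) : normSq (f x) ≤ 1 := by
  have h := (hf.posSemidef ![0, x]).det_nonneg
  rw [det_fin_two, Complex.nonneg_iff] at h
  simpa [h0, hf.map_neg, Complex.mul_conj] using h.1

theorem map_add_eq_mul (hf : IsPosDefFn f) (h0 : f 0 = 1) {x : G} (hx : normSq (f x) = 1)
    (y : G) : f (x + y) = f x * f y := by
  set M := Matrix.of fun i j => f (![0, x + y, y] j - ![0, x + y, y] i)
  -- a null vector of a positive semidefinite matrix lies in its kernel; row `0` gives the claim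
  have hnull : star ![0, 1, -f x] ⬝ᵥ (M *ᵥ ![0, 1, -f x]) = 0 := by
    simp [M, dotProduct, mulVec, Fin.sum_univ_three, h0, hf.map_neg, mul_comm _ (f x),
      Complex.mul_conj, hx]
  have h : f (x + y) - f y * f x = 0 := by
    simpa [mulVec, dotProduct, Fin.sum_univ_three, ← sub_eq_add_neg] using
      congrFun (((hf.posSemidef ![0, x + y, y]).dotProduct_mulVec_zero_iff _).1 hnull) 0
  linear_combination h

theorem normSq_map_add_of_normSq_eq_one (hf : IsPosDefFn f) (h0 : f 0 = 1) {x : G}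
    (hx : normSq (f x) = 1) (y : G) : normSq (f (x + y)) = normSq (f y) := by
  rw [hf.map_add_eq_mul h0 hx, normSq_mul, hx, one_mul]

end IsPosDefFn

noncomputable instance : DivisibleBy (Additive Circle) ℤ :=
  Function.Surjective.divisibleBy (f := Circle.expHom) Circle.exp_surjective
    fun x n => map_zsmul Circle.expHom n x

theorem exists_isCharFn_eq_on_addSubgroup {G : Type*} [AddCommGroup G] (H : AddSubgroup G)
    {f : G → ℂ} (hnorm : ∀ x ∈ H, ‖f x‖ = 1) (hmul : ∀ x ∈ H, ∀ y ∈ H, f (x + y) = f x * f y) :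
    ∃ χ : G → ℂ, IsCharFn χ ∧ ∀ x ∈ H, χ x = f x := by
  let φ : H →+ Additive Circle := AddMonoidHom.mk'
    (fun x => Additive.ofMul ⟨f x, mem_sphere_zero_iff_norm.2 (hnorm x x.2)⟩)
    fun x y => Circle.ext (hmul x x.2 y y.2)
  obtain ⟨χ, hχ⟩ := (Module.Baer.of_divisible _).extension_property_addMonoidHom H.subtype
    Subtype.val_injective φ
  exact ⟨fun x => ((Additive.toMul (χ x) : Circle) : ℂ),
    ⟨fun a b => by simp, fun a => Circle.norm_coe _⟩,
    fun x hx => congrArg (fun g => ((Additive.toMul (g ⟨x, hx⟩) : Circle) : ℂ)) hχ⟩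

theorem IsPosDefFn.exists_isCharFn_of_normSq_eq_zero_or_one {G : Type*} [AddCommGroup G]
    {f : G → ℂ} (hf : IsPosDefFn f) (h0 : f 0 = 1)
    (h01 : ∀ x, normSq (f x) = 0 ∨ normSq (f x) = 1) :
    ∃ H : AddSubgroup G, ∃ χ : G → ℂ, IsCharFn χ ∧ (∀ y ∈ H, f y = χ y) ∧ ∀ y ∉ H, f y = 0 := by
  let H : AddSubgroup G :=
    { carrier := {x | normSq (f x) = 1}
      add_mem' := fun {x y} hx hy => (hf.normSq_map_add_of_normSq_eq_one h0 hx y).trans hy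
      zero_mem' := by simp [h0]
      neg_mem' := fun {x} hx => by simpa [hf.map_neg] using hx }
  have hnorm : ∀ x ∈ H, ‖f x‖ = 1 := fun x hx =>
    (pow_eq_one_iff_of_nonneg (norm_nonneg _) two_ne_zero).1 (by rwa [← normSq_eq_norm_sq])
  obtain ⟨χ, hχ, hχf⟩ := exists_isCharFn_eq_on_addSubgroup H hnorm
    fun x hx y _ => hf.map_add_eq_mul h0 hx y
  exact ⟨H, χ, hχ, fun y hy => (hχf y hy).symm,
    fun y hy => normSq_eq_zero.1 ((h01 y).resolve_right hy)⟩

theorem even_add_of_not_even {G : Type*} [AddCommGroup G] {x y : G}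
    (hxy : ∃ w : G, ∃ m n : ℤ, m • w = x ∧ n • w = y) (hx : ¬Even x) (hy : ¬Even y) :
    Even (x + y) := by
  obtain ⟨w, m, n, rfl, rfl⟩ := hxy
  have hm : Odd m := Int.not_even_iff_odd.1 fun h => hx (h.zsmul_left w)
  have hn : Odd n := Int.not_even_iff_odd.1 fun h => hy (h.zsmul_left w)
  rw [← add_zsmul]
  exact (hm.add_odd hn).zsmul_left w

theorem AddSubgroup.exists_zsmul_eq_of_rat (Y : AddSubgroup ℚ) (x y : Y) :
    ∃ w : Y, ∃ m n : ℤ, m • w = x ∧ n • w = y := by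
  set d : ℚ := (x : ℚ).den * (y : ℚ).den
  set a : ℤ := (x : ℚ).num * (y : ℚ).den
  set b : ℤ := (y : ℚ).num * (x : ℚ).den
  have hd : d ≠ 0 := by positivity
  have hxa : (x : ℚ) = a / d := by
    rw [eq_div_iff hd]; push_cast [a, d]; rw [← Rat.mul_den_eq_num]; ring
  have hyb : (y : ℚ) = b / d := by
    rw [eq_div_iff hd]; push_cast [b, d]; rw [← Rat.mul_den_eq_num]; ring
  have hw : ((a.gcdA b • x + a.gcdB b • y : Y) : ℚ) = ((a.gcd b : ℤ) : ℚ) / d := by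
    rw [Int.gcd_eq_gcd_ab a b]
    push_cast [hxa, hyb]
    ring
  refine ⟨a.gcdA b • x + a.gcdB b • y, a / a.gcd b, b / a.gcd b, ?_, ?_⟩ <;> ext <;>
    rw [AddSubgroup.coe_zsmul, hw, zsmul_eq_mul, ← mul_div_assoc, ← Int.cast_mul]
  · rw [hxa, Int.ediv_mul_cancel (Int.gcd_dvd_left a b)]
  · rw [hyb, Int.ediv_mul_cancel (Int.gcd_dvd_right a b)]

theorem eq_one_of_mul_mul_eq_one {a b c : ℝ} (ha : a ∈ Icc 0 1) (hb : b ∈ Icc 0 1)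
    (hc : c ∈ Icc 0 1) (h : a * b * c = 1) : b = 1 := by
  have hac : a * c ≤ 1 := mul_le_one₀ ha.2 hc.1 hc.2
  nlinarith [mul_le_mul_of_nonneg_left hac hb.1, hb.2]

section Triple

variable {G : Type*} [AddCommGroup G] {p q r : G → ℝ}

theorem mul_mul_apply_eq_zero_or_one (hp : ∀ x, 0 ≤ p x) (hq : ∀ x, 0 ≤ q x)
    (hr : ∀ x, 0 ≤ r x) (hr_even : r.Even)
    (htriple : ∀ x v w, p (x + v - w) * q (x - v + w) * r (x - v - w) =
      (p * q * r) x * (p * q * r) v * (p * q * r) w) (u : G) :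
    (p * q * r) u = 0 ∨ (p * q * r) u = 1 := by
  have h := htriple u u u
  rw [add_sub_cancel_right, sub_add_cancel, sub_self, zero_sub, hr_even] at h
  have hP : 0 ≤ (p * q * r) u := mul_nonneg (mul_nonneg (hp u) (hq u)) (hr u)
  have : (p * q * r) u * ((p * q * r) u - 1) * ((p * q * r) u + 1) = 0 := by
    simp only [Pi.mul_apply] at h ⊢; linear_combination -h
  rcases mul_eq_zero.1 this with h | h
  · exact (mul_eq_zero.1 h).imp id sub_eq_zero.1
  · linarith

theorem apply_add_self_eq_zero_or_one (hp : ∀ x, 0 ≤ p x) (hq : ∀ x, 0 ≤ q x)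
    (hr : ∀ x, 0 ≤ r x) (hp0 : p 0 = 1) (hq0 : q 0 = 1) (hr0 : r 0 = 1) (hr_even : r.Even)
    (htriple : ∀ x v w, p (x + v - w) * q (x - v + w) * r (x - v - w) =
      (p * q * r) x * (p * q * r) v * (p * q * r) w) (u : G) :
    (p (u + u) = 0 ∨ p (u + u) = 1) ∧ (q (u + u) = 0 ∨ q (u + u) = 1) ∧
      (r (u + u) = 0 ∨ r (u + u) = 1) := by
  have hP0 : (p * q * r) 0 = 1 := by simp [hp0, hq0, hr0]
  have hsq : (p * q * r) u * (p * q * r) u = 0 ∨ (p * q * r) u * (p * q * r) u = 1 := by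
    rcases mul_mul_apply_eq_zero_or_one hp hq hr hr_even htriple u with h | h <;> simp [h]
  have h₁ := htriple u u 0
  have h₂ := htriple u 0 u
  have h₃ := htriple 0 u u
  simp only [sub_zero, sub_self, add_zero, zero_add, zero_sub, neg_add_cancel, neg_sub_left,
    hr_even (u + u), hP0, hp0, hq0, hr0, mul_one, one_mul] at h₁ h₂ h₃
  exact ⟨h₁ ▸ hsq, h₂ ▸ hsq, h₃ ▸ hsq⟩

theorem apply_eq_zero_of_triple (hp : ∀ x, p x ∈ Icc 0 1) (hq : ∀ x, q x ∈ Icc 0 1)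
    (hr : ∀ x, r x ∈ Icc 0 1) (hr_even : r.Even) (hq_add : ∀ x, q x = 1 → ∀ y, q (x + y) = q y)
    (htriple : ∀ x v w, p (x + v - w) * q (x - v + w) * r (x - v - w) =
      (p * q * r) x * (p * q * r) v * (p * q * r) w)
    (h2 : ∀ x y : G, ¬Even x → ¬Even y → Even (x + y)) {wp wq wr : G} (hwp : ¬Even wp)
    (hwq : ¬Even wq) (hwr : ¬Even wr) (hpwp : p wp ≠ 0) (hqwq₀ : q wq ≠ 0) (hqwq₁ : q wq ≠ 1) :
    r wr = 0 := by
  have hq_one : ∀ u, (p * q * r) u ≠ 0 → q u = 1 := fun u hu =>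
    eq_one_of_mul_mul_eq_one (hp u) (hq u) (hr u) <|
      (mul_mul_apply_eq_zero_or_one (fun x => (hp x).1) (fun x => (hq x).1)
        (fun x => (hr x).1) hr_even htriple u).resolve_left hu
  obtain ⟨x₀, hx₀⟩ := h2 wp wq hwp hwq
  -- with `v = x₀ + w - wq` the first two arguments of the triple identity are `wp` and `wq`
  obtain rfl : wp = x₀ + x₀ - wq := eq_sub_of_add_eq hx₀
  have key : ∀ w, p (x₀ + x₀ - wq) * q wq * r (wq - w - w) =
      (p * q * r) x₀ * (p * q * r) (x₀ + w - wq) * (p * q * r) w := fun w => by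
    have h := htriple x₀ (x₀ + w - wq) w
    rwa [show x₀ + (x₀ + w - wq) - w = x₀ + x₀ - wq by abel,
      show x₀ - (x₀ + w - wq) + w = wq by abel,
      show x₀ - (x₀ + w - wq) - w = wq - w - w by abel] at h
  have hvanish : ∀ w, (p * q * r) x₀ * (p * q * r) (x₀ + w - wq) * (p * q * r) w = 0 := by
    intro w
    by_contra hw
    simp only [mul_eq_zero, not_or] at hw
    obtain ⟨⟨h₁, h₂⟩, h₃⟩ := hw
    apply hqwq₁
    calc q wq = q (x₀ + w - wq + wq) := (hq_add _ (hq_one _ h₂) wq).symm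
      _ = q (x₀ + w) := by rw [sub_add_cancel]
      _ = q w := hq_add _ (hq_one _ h₁) w
      _ = 1 := hq_one _ h₃
  obtain ⟨t, ht⟩ := h2 wq (-wr) hwq (by rwa [even_neg])
  have h := key t
  rw [hvanish t, show wq - t - t = wr by rw [sub_sub, ← ht]; abel] at h
  exact (mul_eq_zero.1 h).resolve_left (mul_ne_zero hpwp hqwq₀)

theorem exists_forall_eq_zero_or_one_of_triple (hp : ∀ x, p x ∈ Icc 0 1)
    (hq : ∀ x, q x ∈ Icc 0 1) (hr : ∀ x, r x ∈ Icc 0 1)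
    (hp0 : p 0 = 1) (hq0 : q 0 = 1) (hr0 : r 0 = 1) (hr_even : r.Even)
    (hq_add : ∀ x, q x = 1 → ∀ y, q (x + y) = q y)
    (htriple : ∀ x v w, p (x + v - w) * q (x - v + w) * r (x - v - w) =
      (p * q * r) x * (p * q * r) v * (p * q * r) w)
    (h2 : ∀ x y : G, ¬Even x → ¬Even y → Even (x + y)) :
    (∀ x, p x = 0 ∨ p x = 1) ∨ (∀ x, q x = 0 ∨ q x = 1) ∨ (∀ x, r x = 0 ∨ r x = 1) := by
  have hdouble := apply_add_self_eq_zero_or_one (fun x => (hp x).1) (fun x => (hq x).1)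
    (fun x => (hr x).1) hp0 hq0 hr0 hr_even htriple
  by_contra! h
  obtain ⟨⟨wp, hwp₀, hwp₁⟩, ⟨wq, hwq₀, hwq₁⟩, ⟨wr, hwr₀, hwr₁⟩⟩ := h
  have hwp : ¬Even wp := by rintro ⟨t, rfl⟩; exact (hdouble t).1.elim hwp₀ hwp₁
  have hwq : ¬Even wq := by rintro ⟨t, rfl⟩; exact (hdouble t).2.1.elim hwq₀ hwq₁
  have hwr : ¬Even wr := by rintro ⟨t, rfl⟩; exact (hdouble t).2.2.elim hwr₀ hwr₁
  exact hwr₀ (apply_eq_zero_of_triple hp hq hr hr_even hq_add htriple h2 hwp hwq hwr hwp₀ hwq₀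
    hwq₁)

end Triple

theorem Function.Even.apply_zsmul {G α : Type*} [AddCommGroup G] {φ : G → α} (hφ : φ.Even)
    {s : ℤ} (hs : IsUnit s) (x : G) : φ (s • x) = φ x := by
  rcases Int.isUnit_iff.1 hs with rfl | rfl
  · rw [one_zsmul]
  · rw [neg_one_zsmul, hφ]

theorem Fin.prod_univ_three_of_ne {M : Type*} [CommMonoid M] (f : Fin 3 → M) {a b c : Fin 3}
    (hab : a ≠ b) (hac : a ≠ c) (hbc : b ≠ c) : ∏ i, f i = f a * f b * f c := by
  have ha : a ∉ ({b, c} : Finset (Fin 3)) := by simp [hab, hac]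
  have huniv : insert a {b, c} = (Finset.univ : Finset (Fin 3)) :=
    Finset.eq_univ_of_card _ (by rw [Finset.card_insert_of_notMem ha, Finset.card_pair hbc]; rfl)
  rw [← huniv, Finset.prod_insert ha, Finset.prod_pair hbc, mul_assoc]

theorem exists_forall_ne_eq_neg {d : Fin 3 → ℤ} (hd : ∀ i, IsUnit (d i))
    (h : ¬∀ i, d i = d 0) : ∃ a, ∀ i ≠ a, d i = -d a := by
  rcases Int.isUnit_iff.1 (hd 0) with h0 | h0 <;> rcases Int.isUnit_iff.1 (hd 1) with h1 | h1 <;>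
    rcases Int.isUnit_iff.1 (hd 2) with h2 | h2 <;>
    simp_all [Fin.forall_fin_succ, Fin.exists_fin_succ]

theorem exists_parallel_columns_or_sign_pattern {ε : Fin 3 → Fin 3 → ℤ}
    (hε : ∀ i j, IsUnit (ε i j)) :
    (∃ j k, j ≠ k ∧ ∃ s : ℤ, IsUnit s ∧ ∀ i, ε i k = s * ε i j) ∨
    ∃ a b c : Fin 3, a ≠ b ∧ a ≠ c ∧ b ≠ c ∧ ∃ σ τ : ℤ, IsUnit σ ∧ IsUnit τ ∧
      ε a 0 * ε a 1 * σ = 1 ∧ ε a 0 * ε a 2 * τ = -1 ∧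
      ε b 0 * ε b 1 * σ = -1 ∧ ε b 0 * ε b 2 * τ = 1 ∧
      ε c 0 * ε c 1 * σ = -1 ∧ ε c 0 * ε c 2 * τ = -1 := by
  have hsq : ∀ i j, ε i j * ε i j = 1 := fun i j => Int.isUnit_mul_self (hε i j)
  obtain ⟨δ, hδ⟩ : ∃ δ : Fin 3 → ℤ, ∀ i, δ i = ε i 0 * ε i 1 := ⟨_, fun _ => rfl⟩
  obtain ⟨γ, hγ⟩ : ∃ γ : Fin 3 → ℤ, ∀ i, γ i = ε i 0 * ε i 2 := ⟨_, fun _ => rfl⟩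
  have hδu : ∀ i, IsUnit (δ i) := fun i => hδ i ▸ (hε i 0).mul (hε i 1)
  have hγu : ∀ i, IsUnit (γ i) := fun i => hγ i ▸ (hε i 0).mul (hε i 2)
  by_cases hδc : ∀ i, δ i = δ 0
  · refine Or.inl ⟨0, 1, by decide, δ 0, hδu 0, fun i => ?_⟩
    rw [← hδc i, hδ i]
    linear_combination (-ε i 1) * hsq i 0
  by_cases hγc : ∀ i, γ i = γ 0
  · refine Or.inl ⟨0, 2, by decide, γ 0, hγu 0, fun i => ?_⟩
    rw [← hγc i, hγ i]
    linear_combination (-ε i 2) * hsq i 0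
  by_cases hδγc : ∀ i, δ i * γ i = δ 0 * γ 0
  · refine Or.inl ⟨1, 2, by decide, δ 0 * γ 0, (hδu 0).mul (hγu 0), fun i => ?_⟩
    rw [← hδγc i, hδ i, hγ i]
    linear_combination (-ε i 2 * ε i 1 * ε i 1) * hsq i 0 - ε i 2 * hsq i 1
  -- `σ` and `τ` are the values of `δ` and `γ` at the rows where they take their minority sign
  obtain ⟨a, ha⟩ := exists_forall_ne_eq_neg hδu hδc
  obtain ⟨b, hb⟩ := exists_forall_ne_eq_neg hγu hγc
  have hab : a ≠ b := by
    rintro rfl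
    have hconst : ∀ i, δ i * γ i = δ a * γ a := fun i => by
      by_cases hi : i = a
      · rw [hi]
      · rw [ha i hi, hb i hi, neg_mul_neg]
    exact hδγc fun i => (hconst i).trans (hconst 0).symm
  obtain ⟨c, hca, hcb⟩ := (by decide : ∀ a b : Fin 3, ∃ c, c ≠ a ∧ c ≠ b) a b
  refine Or.inr ⟨a, b, c, hab, hca.symm, hcb.symm, δ a, γ b, hδu a, hγu b, ?_⟩
  simp only [← hδ, ← hγ, ha b hab.symm, hb a hab, ha c hca, hb c hcb, neg_mul,
    Int.isUnit_mul_self (hδu a), Int.isUnit_mul_self (hγu b), and_self]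

section SkitovichDarmois

variable {G : Type*} [AddCommGroup G]

theorem forall_eq_one_of_column_eq_smul {ι κ : Type*} [Fintype ι] [Fintype κ] [DecidableEq κ]
    {ψ : ι → G → ℝ} {ε : ι → κ → ℤ} (hψ : ∀ i x, ψ i x ∈ Icc 0 1) (hψ0 : ∀ i, ψ i 0 = 1)
    (hψ_even : ∀ i, (ψ i).Even)
    (hsd : ∀ u : κ → G, ∏ i, ψ i (∑ j, ε i j • u j) = ∏ i, ∏ j, ψ i (u j))
    {j k : κ} (hjk : j ≠ k) {s : ℤ} (hs : IsUnit s) (hcol : ∀ i, ε i k = s * ε i j)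
    (i : ι) (x : G) : ψ i x = 1 := by
  set u : κ → G := Pi.single j x - Pi.single k (s • x)
  have hrow : ∀ i, ∑ l, ε i l • u l = 0 := fun i => by
    simp only [u, Pi.sub_apply, Pi.single_apply, smul_sub, smul_ite, smul_zero, smul_smul,
      Finset.sum_sub_distrib, Finset.sum_ite_eq', Finset.mem_univ, if_true, hcol]
    rw [show s * ε i j * s = ε i j by linear_combination ε i j * Int.isUnit_mul_self hs, sub_self]
  have hcolumns : ∀ i, ∏ l, ψ i (u l) = ψ i x * ψ i x := fun i => by
    rw [Finset.prod_eq_mul j k hjk (fun l _ hl => by simp [u, hl.1, hl.2, hψ0]) (by simp) (by simp)]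
    simp only [u, Pi.sub_apply, Pi.single_eq_same, Pi.single_eq_of_ne hjk,
      Pi.single_eq_of_ne hjk.symm, sub_zero, zero_sub, hψ_even i _, (hψ_even i).apply_zsmul hs]
  have h := hsd u
  simp only [hrow, hψ0, Finset.prod_const_one, hcolumns] at h
  have hle := Finset.prod_le_prod_of_subset_of_le_one (Finset.subset_univ {i})
    (fun i _ => mul_nonneg (hψ i x).1 (hψ i x).1)
    (fun i _ _ => mul_le_one₀ (hψ i x).2 (hψ i x).1 (hψ i x).2)
  rw [← h, Finset.prod_singleton] at hle
  nlinarith [(hψ i x).1, (hψ i x).2]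

theorem triple_of_sign_pattern {ψ : Fin 3 → G → ℝ} {ε : Fin 3 → Fin 3 → ℤ}
    (hψ_even : ∀ i, (ψ i).Even) (hε : ∀ i j, IsUnit (ε i j))
    (hsd : ∀ u : Fin 3 → G, ∏ i, ψ i (∑ j, ε i j • u j) = ∏ i, ∏ j, ψ i (u j))
    {a b c : Fin 3} (hab : a ≠ b) (hac : a ≠ c) (hbc : b ≠ c) {σ τ : ℤ} (hσ : IsUnit σ)
    (hτ : IsUnit τ)
    (hpat : ε a 0 * ε a 1 * σ = 1 ∧ ε a 0 * ε a 2 * τ = -1 ∧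
      ε b 0 * ε b 1 * σ = -1 ∧ ε b 0 * ε b 2 * τ = 1 ∧
      ε c 0 * ε c 1 * σ = -1 ∧ ε c 0 * ε c 2 * τ = -1) (x v w : G) :
    ψ a (x + v - w) * ψ b (x - v + w) * ψ c (x - v - w) =
      (ψ a * ψ b * ψ c) x * (ψ a * ψ b * ψ c) v * (ψ a * ψ b * ψ c) w := by
  obtain ⟨haσ, haτ, hbσ, hbτ, hcσ, hcτ⟩ := hpat
  have hrow : ∀ i, ψ i (∑ j, ε i j • ![x, σ • v, τ • w] j) =
      ψ i (x + (ε i 0 * ε i 1 * σ) • v + (ε i 0 * ε i 2 * τ) • w) := fun i => by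
    rw [← (hψ_even i).apply_zsmul (hε i 0) (x + _ + _)]
    simp [Fin.sum_univ_three, smul_add, smul_smul, ← mul_assoc, Int.isUnit_mul_self (hε i 0)]
  have hcol : ∀ i, ∏ j, ψ i (![x, σ • v, τ • w] j) = ψ i x * ψ i v * ψ i w := fun i => by
    simp [Fin.prod_univ_three, (hψ_even i).apply_zsmul hσ, (hψ_even i).apply_zsmul hτ]
  have h := hsd ![x, σ • v, τ • w]
  simp only [hrow, hcol] at h
  rw [Fin.prod_univ_three_of_ne _ hab hac hbc, Fin.prod_univ_three_of_ne _ hab hac hbc, haσ, haτ,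
    hbσ, hbτ, hcσ, hcτ] at h
  simp only [one_zsmul, neg_one_zsmul, ← sub_eq_add_neg] at h
  simp only [Pi.mul_apply]
  linear_combination h

end SkitovichDarmois

theorem skitovich_darmois_solenoid_dual_three_forms_general
    (Y : AddSubgroup ℚ)
    (f : Fin 3 → ↥Y → ℂ)
    (hpd : ∀ i, IsPosDefFn (f i)) (hnorm : ∀ i, f i 0 = 1)
    (ε : Fin 3 → Fin 3 → ℤ) (hε : ∀ i j, ε i j = 1 ∨ ε i j = -1)
    (heq : ∀ u : Fin 3 → ↥Y,
      ∏ i, f i (∑ j, ε i j • u j) = ∏ i, ∏ j, f i (ε i j • u j)) :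
    ∃ i : Fin 3, ∃ H : AddSubgroup ↥Y, ∃ χ : ↥Y → ℂ, IsCharFn χ ∧
      (∀ y ∈ H, f i y = χ y) ∧ (∀ y ∉ H, f i y = 0) := by
  set ψ : Fin 3 → Y → ℝ := fun i x => normSq (f i x)
  have hψ : ∀ i x, ψ i x ∈ Icc 0 1 :=
    fun i x => ⟨normSq_nonneg _, (hpd i).normSq_le_one (hnorm i) x⟩
  have hψ0 : ∀ i, ψ i 0 = 1 := fun i => by simp [ψ, hnorm i]
  have hψ_even : ∀ i, (ψ i).Even := fun i x => by simp [ψ, (hpd i).map_neg]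
  have hεu : ∀ i j, IsUnit (ε i j) := fun i j => Int.isUnit_iff.2 (hε i j)
  have hsd : ∀ u : Fin 3 → Y, ∏ i, ψ i (∑ j, ε i j • u j) = ∏ i, ∏ j, ψ i (u j) := fun u =>
    calc ∏ i, ψ i (∑ j, ε i j • u j) = ∏ i, ∏ j, ψ i (ε i j • u j) := by
          simpa only [ψ, map_prod] using congrArg normSq (heq u)
      _ = ∏ i, ∏ j, ψ i (u j) := by simp only [(hψ_even _).apply_zsmul (hεu _ _)]
  obtain ⟨i, hi⟩ : ∃ i, ∀ x, ψ i x = 0 ∨ ψ i x = 1 := by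
    rcases exists_parallel_columns_or_sign_pattern hεu with
      ⟨j, k, hjk, s, hs, hcol⟩ | ⟨a, b, c, hab, hac, hbc, σ, τ, hσ, hτ, hpat⟩
    · exact ⟨0, fun x => .inr (forall_eq_one_of_column_eq_smul hψ hψ0 hψ_even hsd hjk hs hcol 0 x)⟩
    · rcases exists_forall_eq_zero_or_one_of_triple (hψ a) (hψ b) (hψ c) (hψ0 a) (hψ0 b) (hψ0 c)
        (hψ_even c) (fun x hx => (hpd b).normSq_map_add_of_normSq_eq_one (hnorm b) hx)
        (triple_of_sign_pattern hψ_even hεu hsd hab hac hbc hσ hτ hpat)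
        (fun x y => even_add_of_not_even (Y.exists_zsmul_eq_of_rat x y)) with h | h | h
      exacts [⟨a, h⟩, ⟨b, h⟩, ⟨c, h⟩]
  exact ⟨i, (hpd i).exists_isCharFn_of_normSq_eq_zero_or_one (hnorm i) hi⟩

/-- Let `Y` be a nonzero subgroup of `ℚ` with `pY ≠ Y` for every prime `p`
(`Y` is the character group of an `a`-adic solenoid on which no `x ↦ px` is a
topological automorphism). If normalized positive definite functions `f_1, f_2, f_3`
on `Y` satisfy the Skitovich–Darmois equation with coefficients
`ε i j ∈ {1, −1}`, then at least one `f i` has idempotent form: there are a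
subgroup `H` of `Y` and a character `χ` of `Y` with `f i = χ` on `H` and
`f i = 0` off `H`. -/
theorem skitovich_darmois_solenoid_dual_three_forms
    (Y : AddSubgroup ℚ) (hY : Y ≠ ⊥)
    (hprime : ∀ p : ℕ, p.Prime → Y.map (AddMonoidHom.mulLeft (p : ℚ)) ≠ Y)
    (f : Fin 3 → ↥Y → ℂ)
    (hpd : ∀ i, IsPosDefFn (f i)) (hnorm : ∀ i, f i 0 = 1)
    (ε : Fin 3 → Fin 3 → ℤ) (hε : ∀ i j, ε i j = 1 ∨ ε i j = -1)
    (heq : ∀ u : Fin 3 → ↥Y,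
      ∏ i, f i (∑ j, ε i j • u j) = ∏ i, ∏ j, f i (ε i j • u j)) :
    ∃ i : Fin 3, ∃ H : AddSubgroup ↥Y, ∃ χ : ↥Y → ℂ, IsCharFn χ ∧
      (∀ y ∈ H, f i y = χ y) ∧ (∀ y ∉ H, f i y = 0) :=
  skitovich_darmois_solenoid_dual_three_forms_general Y f hpd hnorm ε hε heq
end

section
/- Let Y be a subgroup of ℚ with 2Y ≠ Y, and let f_1, f_2, f_3 be normalized positive definite functions on Y satisfying equation (S-D T): f_1(u_1+u_2+u_3)·f_2(u_1−u_2−u_3)·f_3(u_1+u_2−u_3) = f_1(u_1)f_1(u_2)f_1(u_3)·f_2(u_1)f_2(−u_2)f_2(−u_3)·f_3(u_1)f_3(u_2)f_3(−u_3) for all u_1, u_2, u_3 ∈ Y. If for every y ∈ Y with y ≠ 0 at least one of f_1(y), f_2(y), f_3(y) is zero (i.e. N = {y : f_1(y)f_2(y)f_3(y) ≠ 0} = {0}), then there exists an index i ∈ {1,2,3} such that f_i(y) = 0 for all y ≠ 0 (that is, f_i is the characteristic function of the Haar distribution of the full compact character group of Y). -/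
/-- Equation (S-D T) for functions `f₁, f₂, f₃` on an abelian group. -/
def SDTEq {Y : Type*} [AddCommGroup Y] (f₁ f₂ f₃ : Y → ℂ) : Prop :=
  ∀ u₁ u₂ u₃ : Y,
    f₁ (u₁ + u₂ + u₃) * f₂ (u₁ - u₂ - u₃) * f₃ (u₁ + u₂ - u₃) =
      f₁ u₁ * f₁ u₂ * f₁ u₃ * (f₂ u₁ * f₂ (-u₂) * f₂ (-u₃)) *
        (f₃ u₁ * f₃ u₂ * f₃ (-u₃))

lemma IsPosDefFn.apply_neg_s10 {G : Type*} [AddCommGroup G] {f : G → ℂ} (hf : IsPosDefFn f) (y : G) :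
    f (-y) = starRingEnd ℂ (f y) := by
  have h0 := (hf 1 ![0] ![1]).2
  have h1 := (hf 2 ![0, y] ![1, 1]).2
  have h2 := (hf 2 ![0, y] ![1, Complex.I]).2
  simp only [Fin.sum_univ_one, Fin.sum_univ_two, Matrix.cons_val_zero, Matrix.cons_val_one,
    Matrix.cons_val_fin_one, sub_self, zero_sub, sub_zero, map_one, Complex.conj_I, mul_one,
    mul_neg, Complex.add_im, Complex.neg_im, Complex.mul_im, Complex.mul_re, Complex.I_re,
    Complex.I_im, mul_zero, add_zero] at h0 h1 h2
  apply Complex.ext <;> simp only [Complex.conj_re, Complex.conj_im] <;> linarith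

lemma IsPosDefFn.apply_neg_eq_zero_iff {G : Type*} [AddCommGroup G] {f : G → ℂ}
    (hf : IsPosDefFn f) (y : G) : f (-y) = 0 ↔ f y = 0 := by
  rw [hf.apply_neg_s10, map_eq_zero]

lemma AddSubgroup.exists_zsmul_eq_of_rat_s10 {Y : AddSubgroup ℚ} (a : Y) {b : Y} (hb : b ≠ 0) :
    ∃ g : Y, ∃ m n : ℤ, m • g = a ∧ n • g = b := by
  set r : ℚ := a / b
  have hrb : r * b = a := div_mul_cancel₀ _ fun h => hb (Subtype.ext h)
  have hab : (r.den : ℚ) * a = r.num * b := by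
    rw [← Rat.mul_den_eq_num, ← hrb]; ring
  obtain ⟨s, t, hst⟩ : IsCoprime r.num r.den := Int.isCoprime_iff_gcd_eq_one.2 r.reduced
  have hst' : (s : ℚ) * r.num + t * r.den = 1 := by exact_mod_cast hst
  -- `a / b = p / q` reduced and `s p + t q = 1` give `p g = a`, `q g = b` for `g = s a + t b`
  refine ⟨s • a + t • b, r.num, r.den, Subtype.ext ?_, Subtype.ext ?_⟩ <;>
    push_cast [zsmul_eq_mul]
  · linear_combination -(t : ℚ) * hab + (a : ℚ) * hst'
  · linear_combination (s : ℚ) * hab + (b : ℚ) * hst'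

lemma AddSubgroup.even_add_of_not_even_rat {Y : AddSubgroup ℚ} {a b : Y} (ha : ¬Even a)
    (hb : ¬Even b) : Even (a + b) := by
  have hb0 : b ≠ 0 := by rintro rfl; exact hb .zero
  obtain ⟨g, m, n, rfl, rfl⟩ := exists_zsmul_eq_of_rat_s10 a hb0
  have hm : Odd m := Int.not_even_iff_odd.1 fun h => ha (h.zsmul_left g)
  have hn : Odd n := Int.not_even_iff_odd.1 fun h => hb (h.zsmul_left g)
  rw [← add_zsmul]
  exact (hm.add_odd hn).zsmul_left g

namespace SDTEq

variable {G : Type*} [AddCommGroup G] {f₁ f₂ f₃ : G → ℂ}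

lemma apply_eq_zero_of_even (heq : SDTEq f₁ f₂ f₃) (hn₁ : f₁ 0 = 1) (hn₂ : f₂ 0 = 1)
    (hn₃ : f₃ 0 = 1) (hN : ∀ y, y ≠ 0 → f₁ y * f₂ y * f₃ y = 0) {a : G} (ha : a ≠ 0)
    (he : Even a) : f₁ a = 0 ∧ f₂ a = 0 ∧ f₃ a = 0 := by
  obtain ⟨v, rfl⟩ := he
  have hv := hN v (by rintro rfl; exact ha (add_zero 0))
  refine ⟨?_, ?_, ?_⟩
  · have h := heq v 0 v
    simp only [add_zero, sub_zero, neg_zero, sub_self, hn₁, hn₂, hn₃] at h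
    linear_combination h + f₁ v * f₂ (-v) * f₃ (-v) * hv
  · have h := heq v (-v) 0
    simp only [add_zero, sub_zero, neg_zero, neg_neg, add_neg_cancel, sub_neg_eq_add,
      hn₁, hn₂, hn₃] at h
    linear_combination h + f₁ (-v) * f₂ v * f₃ (-v) * hv
  · have h := heq 0 v (-v)
    simp only [zero_add, zero_sub, neg_neg, sub_neg_eq_add, neg_add_cancel, add_neg_cancel,
      hn₁, hn₂, hn₃] at h
    linear_combination h + f₁ (-v) * f₂ (-v) * f₃ v * hv

lemma eq_zero_of_mul_ne_zero (heq : SDTEq f₁ f₂ f₃) (hpd₂ : IsPosDefFn f₂)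
    (hpd₃ : IsPosDefFn f₃) (hN : ∀ y, y ≠ 0 → f₁ y * f₂ y * f₃ y = 0) {u₁ u₂ u₃ : G}
    (h : f₁ (u₁ + u₂ + u₃) * f₂ (u₁ - u₂ - u₃) * f₃ (u₁ + u₂ - u₃) ≠ 0) :
    u₁ = 0 ∧ u₂ = 0 ∧ u₃ = 0 := by
  have hN' : ∀ u, f₁ u ≠ 0 → f₂ u ≠ 0 → f₃ u ≠ 0 → u = 0 := fun u h₁ h₂ h₃ =>
    by_contra fun hu => mul_ne_zero (mul_ne_zero h₁ h₂) h₃ (hN u hu)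
  rw [heq] at h
  simp only [ne_eq, mul_eq_zero, not_or, hpd₂.apply_neg_eq_zero_iff,
    hpd₃.apply_neg_eq_zero_iff] at h
  exact ⟨hN' _ h.1.1.1.1 h.1.2.1.1 h.2.1.1, hN' _ h.1.1.1.2 h.1.2.1.2 h.2.1.2,
    hN' _ h.1.1.2 h.1.2.2 h.2.2⟩

theorem haar_of_N_eq_zero [IsAddTorsionFree G]
    (h2G : ∀ a b : G, ¬Even a → ¬Even b → Even (a + b))
    (hpd₂ : IsPosDefFn f₂) (hpd₃ : IsPosDefFn f₃)
    (hn₁ : f₁ 0 = 1) (hn₂ : f₂ 0 = 1) (hn₃ : f₃ 0 = 1) (heq : SDTEq f₁ f₂ f₃)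
    (hN : ∀ y, y ≠ 0 → f₁ y * f₂ y * f₃ y = 0) :
    (∀ y, y ≠ 0 → f₁ y = 0) ∨ (∀ y, y ≠ 0 → f₂ y = 0) ∨ (∀ y, y ≠ 0 → f₃ y = 0) := by
  by_contra! hcon
  obtain ⟨⟨a₁, ha₁, hf₁⟩, ⟨a₂, ha₂, hf₂⟩, ⟨a₃, ha₃, hf₃⟩⟩ := hcon
  have hvanish {a : G} (ha : a ≠ 0) := heq.apply_eq_zero_of_even hn₁ hn₂ hn₃ hN ha
  have odd₁ : ¬Even a₁ := fun he => hf₁ (hvanish ha₁ he).1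
  have odd₂ : ¬Even a₂ := fun he => hf₂ (hvanish ha₂ he).2.1
  have odd₃ : ¬Even a₃ := fun he => hf₃ (hvanish ha₃ he).2.2
  obtain ⟨u₁, hu₁⟩ := h2G a₁ a₂ odd₁ odd₂
  obtain ⟨u₂, hu₂⟩ := h2G a₃ (-a₂) odd₃ (even_neg.not.2 odd₂)
  obtain ⟨u₃, hu₃⟩ := h2G a₁ (-a₃) odd₁ (even_neg.not.2 odd₃)
  have e₁ : u₁ + u₂ + u₃ = a₁ := nsmul_right_injective two_ne_zero <| by
    linear_combination (norm := module) -hu₁ - hu₂ - hu₃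
  have e₂ : u₁ - u₂ - u₃ = a₂ := nsmul_right_injective two_ne_zero <| by
    linear_combination (norm := module) -hu₁ + hu₂ + hu₃
  have e₃ : u₁ + u₂ - u₃ = a₃ := nsmul_right_injective two_ne_zero <| by
    linear_combination (norm := module) -hu₁ - hu₂ + hu₃
  obtain ⟨rfl, rfl, rfl⟩ := heq.eq_zero_of_mul_ne_zero hpd₂ hpd₃ hN <| by
    rw [e₁, e₂, e₃]; exact mul_ne_zero (mul_ne_zero hf₁ hf₂) hf₃
  exact ha₁ (by simpa using e₁.symm)

end SDTEq

theorem skitovich_darmois_SDT_haar_of_N_eq_zero_general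
    (Y : AddSubgroup ℚ)
    (f₁ f₂ f₃ : ↥Y → ℂ)
    (hpd₂ : IsPosDefFn f₂) (hpd₃ : IsPosDefFn f₃)
    (hn₁ : f₁ 0 = 1) (hn₂ : f₂ 0 = 1) (hn₃ : f₃ 0 = 1)
    (heq : SDTEq f₁ f₂ f₃)
    (hN : ∀ y : ↥Y, y ≠ 0 → f₁ y * f₂ y * f₃ y = 0) :
    (∀ y : ↥Y, y ≠ 0 → f₁ y = 0) ∨ (∀ y : ↥Y, y ≠ 0 → f₂ y = 0) ∨
      (∀ y : ↥Y, y ≠ 0 → f₃ y = 0) :=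
  SDTEq.haar_of_N_eq_zero (fun _ _ => AddSubgroup.even_add_of_not_even_rat) hpd₂ hpd₃
    hn₁ hn₂ hn₃ heq hN

/-- Let `Y` be a subgroup of `ℚ` with `2Y ≠ Y`, and let `f₁, f₂, f₃` be normalized
positive definite functions on `Y` satisfying equation (S-D T). If for every
nonzero `y` at least one of `f₁(y), f₂(y), f₃(y)` vanishes (i.e. `N = {0}`), then
one of the functions vanishes at every nonzero point, i.e. it is the characteristic
function of the Haar distribution of the full compact character group of `Y`. -/
theorem skitovich_darmois_SDT_haar_of_N_eq_zero
    (Y : AddSubgroup ℚ)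
    (h2Y : Y.map (AddMonoidHom.mulLeft (2 : ℚ)) ≠ Y)
    (f₁ f₂ f₃ : ↥Y → ℂ)
    (hpd₁ : IsPosDefFn f₁) (hpd₂ : IsPosDefFn f₂) (hpd₃ : IsPosDefFn f₃)
    (hn₁ : f₁ 0 = 1) (hn₂ : f₂ 0 = 1) (hn₃ : f₃ 0 = 1)
    (heq : SDTEq f₁ f₂ f₃)
    (hN : ∀ y : ↥Y, y ≠ 0 → f₁ y * f₂ y * f₃ y = 0) :
    (∀ y : ↥Y, y ≠ 0 → f₁ y = 0) ∨ (∀ y : ↥Y, y ≠ 0 → f₂ y = 0) ∨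
      (∀ y : ↥Y, y ≠ 0 → f₃ y = 0) :=
  skitovich_darmois_SDT_haar_of_N_eq_zero_general Y f₁ f₂ f₃ hpd₂ hpd₃ hn₁ hn₂ hn₃ heq hN
end

section
/- Let Y be a subgroup of ℚ, let p be a prime with p ≡ 1 (mod 4), and let y_0 ∈ Y with y_0 ∉ 2Y. Define f : Y → ℂ by f(0) = 1, f(y_0) = f(−y_0) = 1/2, and f(y) = 0 for all other y. Then f satisfies the equation f(u+v+t)·f(u+pv+t)·f(u+v+pt) = f(u)^3·f(v)^2·f(t)^2·f(pv)·f(pt) for all u, v, t ∈ Y. -/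
/-! The function `f` is supported on `S = {0, y₀, -y₀}`. If `v ≠ 0`, then both the pair
`u + v + t`, `u + p v + t` and the pair `v`, `p v` differ by `(p - 1) v`, a nonzero element of `4Y`
since `p ≡ 1 (mod 4)`. Two elements of `S` differ by `0`, `±y₀` or `±2y₀`, and none of the last
four lies in `4Y` because `y₀ ∉ 2Y`; so one factor on each side vanishes. The case `t ≠ 0` is
symmetric, and for `v = t = 0` both sides equal `f u ^ 3`. -/

section

variable {G : Type*} [AddCommGroup G] [IsAddTorsionFree G] {y₀ a b : G}

theorem eq_of_sub_eq_four_nsmul {x : G} (hy₀ : ¬ Even y₀)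
    (ha : a ∈ ({0, y₀, -y₀} : Set G)) (hb : b ∈ ({0, y₀, -y₀} : Set G))
    (h : b - a = 4 • x) : a = b := by
  have hodd : ∀ s : G, ¬ Even s → s ≠ 4 • x ∧ 2 • s ≠ 4 • x := fun s hs =>
    ⟨fun h4 => hs ⟨2 • x, by rw [h4]; abel⟩,
     fun h4 => hs ⟨x, nsmul_right_injective two_ne_zero (by simp only [h4]; abel)⟩⟩
  have hy₀' : ¬ Even (-y₀) := by rwa [even_neg]
  simp only [Set.mem_insert_iff, Set.mem_singleton_iff] at ha hb
  rcases ha with rfl | rfl | rfl <;> rcases hb with hb | hb | hb <;> subst hb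
  · rfl
  · exact absurd (by rw [← h]; abel) (hodd _ hy₀).1
  · exact absurd (by rw [← h]; abel) (hodd _ hy₀').1
  · exact absurd (by rw [← h]; abel) (hodd _ hy₀').1
  · rfl
  · exact absurd (by rw [← h]; abel) (hodd _ hy₀').2
  · exact absurd (by rw [← h]; abel) (hodd _ hy₀).1
  · exact absurd (by rw [← h]; abel) (hodd _ hy₀).2
  · rfl

theorem eq_zero_of_sub_eq_nsmul_sub {w : G} {n : ℕ} (hy₀ : ¬ Even y₀)
    (hn : n % 4 = 1) (hn1 : n ≠ 1)
    (ha : a ∈ ({0, y₀, -y₀} : Set G)) (hb : b ∈ ({0, y₀, -y₀} : Set G))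
    (h : b - a = n • w - w) : w = 0 := by
  obtain ⟨m, rfl⟩ : ∃ m, n = 4 * m + 1 := ⟨n / 4, by omega⟩
  have hw : b - a = 4 • m • w := by
    rw [h, add_nsmul, one_nsmul, add_sub_cancel_right, mul_comm, mul_nsmul]
  have hm : 4 * m ≠ 0 := by omega
  rw [eq_of_sub_eq_four_nsmul hy₀ ha hb hw, sub_self, smul_smul] at hw
  exact (nsmul_eq_zero_iff_right hm).1 hw.symm

theorem mul_eq_zero_of_sub_eq_nsmul_sub {M : Type*} [MulZeroClass M] {f : G → M} {w : G}
    {n : ℕ} (hy₀ : ¬ Even y₀) (hn : n % 4 = 1) (hn1 : n ≠ 1)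
    (hf : Function.support f ⊆ {0, y₀, -y₀}) (hw : w ≠ 0) (h : b - a = n • w - w) :
    f a * f b = 0 := by
  by_contra hab
  exact hw (eq_zero_of_sub_eq_nsmul_sub hy₀ hn hn1 (hf (left_ne_zero_of_mul hab))
    (hf (right_ne_zero_of_mul hab)) h)

end

theorem SD_equation_for_density_distribution_p_one_mod_four_general
    (Y : AddSubgroup ℚ) (p : ℕ) (hp : p.Prime) (hp4 : p % 4 = 1)
    (y₀ : ↥Y) (hy₀ : ¬ ∃ z : ↥Y, y₀ = z + z)
    (f : ↥Y → ℂ)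
    (hf0 : f 0 = 1)
    (hfz : ∀ y : ↥Y, y ≠ 0 → y ≠ y₀ → y ≠ -y₀ → f y = 0) :
    ∀ u v t : ↥Y,
      f (u + v + t) * f (u + p • v + t) * f (u + v + p • t) =
        f u ^ 3 * f v ^ 2 * f t ^ 2 * f (p • v) * f (p • t) := by
  have hsupp : Function.support f ⊆ {0, y₀, -y₀} := fun y hy => by
    by_contra hy'
    simp only [Set.mem_insert_iff, Set.mem_singleton_iff, not_or] at hy'
    exact hy (hfz y hy'.1 hy'.2.1 hy'.2.2)
  have hvanish : ∀ {a b w : ↥Y}, w ≠ 0 → b - a = p • w - w → f a * f b = 0 := fun hw h =>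
    mul_eq_zero_of_sub_eq_nsmul_sub hy₀ hp4 hp.one_lt.ne' hsupp hw h
  intro u v t
  by_cases hv : v = 0
  · by_cases ht : t = 0
    · simp only [hv, ht, add_zero, smul_zero, hf0]; ring
    · linear_combination
        f (u + p • v + t) * hvanish (a := u + v + t) (b := u + v + p • t) ht (by abel)
        - f u ^ 3 * f v ^ 2 * f t * f (p • v) * hvanish (a := t) ht rfl
  · linear_combination
      f (u + v + p • t) * hvanish (a := u + v + t) (b := u + p • v + t) hv (by abel)
      - f u ^ 3 * f v * f t ^ 2 * f (p • t) * hvanish (a := v) hv rfl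

/-- Let `Y` be a subgroup of `ℚ`, `p` a prime with `p ≡ 1 (mod 4)`, and `y₀ ∈ Y`
with `y₀ ∉ 2Y`. The function `f` with `f(0) = 1`, `f(±y₀) = 1/2` and `f = 0`
elsewhere satisfies the Skitovich–Darmois equation corresponding to the linear
forms `L₁ = ξ₁+ξ₂+ξ₃`, `L₂ = ξ₁+pξ₂+ξ₃`, `L₃ = ξ₁+ξ₂+pξ₃`. -/
theorem SD_equation_for_density_distribution_p_one_mod_four
    (Y : AddSubgroup ℚ) (p : ℕ) (hp : p.Prime) (hp4 : p % 4 = 1)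
    (y₀ : ↥Y) (hy₀ : ¬ ∃ z : ↥Y, y₀ = z + z)
    (f : ↥Y → ℂ)
    (hf0 : f 0 = 1) (hfy : f y₀ = 1/2) (hfy' : f (-y₀) = 1/2)
    (hfz : ∀ y : ↥Y, y ≠ 0 → y ≠ y₀ → y ≠ -y₀ → f y = 0) :
    ∀ u v t : ↥Y,
      f (u + v + t) * f (u + p • v + t) * f (u + v + p • t) =
        f u ^ 3 * f v ^ 2 * f t ^ 2 * f (p • v) * f (p • t) :=
  SD_equation_for_density_distribution_p_one_mod_four_general Y p hp hp4 y₀ hy₀ f hf0 hfz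
end

section
/- Let p and q be distinct primes, let H = {m/q^k : m ∈ ℤ, k ≥ 0} be the subgroup of ℚ generated by the fractions with denominators powers of q, let 0 < c < 1, and put s = p² + q. Define g : ℚ → ℂ by g(y) = 1 if y ∈ pH, g(y) = c if y ∈ H but y ∉ pH, and g(y) = 0 if y ∉ H. Then for every n ≥ 2 and all u_1,…,u_n ∈ ℚ the following equation holds: g(u_1 + p(u_2 + ⋯ + u_n)) · Π_{i=2}^n g(pu_1 + su_i + p²Σ_{j≥2, j≠i} u_j) = g(u_1)·Π_{j=2}^n g(pu_j) · Π_{i=2}^n [ g(pu_1)·g(su_i)·Π_{j≥2, j≠i} g(p²u_j) ]. -/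
/-!
Write `P = pH`. The function `g` is `P`-periodic, and since `H` is closed under division by `q`
it is also invariant under `y ↦ q y`; hence `g (p x + q y) = g y` whenever `x ∈ H`. The `i`-th
linear form on the left equals `p L₁ + q uᵢ`, and `s uᵢ = p (p uᵢ) + q uᵢ`, so both sides reduce
to `g u₁ ∏_{i ≥ 2} g uᵢ`: when all `uᵢ` lie in `H` the factors `g (p ·)`, `g (p² ·)` equal `1`
and `g L₁ = g u₁`, and otherwise both sides contain a vanishing factor.
-/

open Finset

theorem AddSubgroup.natCast_mul_mem {R : Type*} [Ring R] (H : AddSubgroup R) (n : ℕ) {y : R}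
    (hy : y ∈ H) : (n : R) * y ∈ H := by
  simpa [nsmul_eq_mul] using H.nsmul_mem hy n

theorem AddSubgroup.map_mulLeft_natCast_le {R : Type*} [Ring R] (H : AddSubgroup R) (n : ℕ) :
    H.map (AddMonoidHom.mulLeft (n : R)) ≤ H := by
  rintro _ ⟨x, hx, rfl⟩
  exact H.natCast_mul_mem n hx

theorem AddSubgroup.natCast_mul_mem_map_mulLeft_iff {K : Type*} [Field K] {H : AddSubgroup K}
    (p : ℕ) {q : ℕ} (hq : (q : K) ≠ 0) (hqH : ∀ y, (q : K) * y ∈ H → y ∈ H) (y : K) :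
    (q : K) * y ∈ H.map (AddMonoidHom.mulLeft (p : K)) ↔
      y ∈ H.map (AddMonoidHom.mulLeft (p : K)) := by
  simp only [AddSubgroup.mem_map, AddMonoidHom.coe_mulLeft]
  constructor
  · rintro ⟨x, hx, hxy⟩
    refine ⟨x / q, hqH _ (by rwa [mul_div_cancel₀ _ hq]), ?_⟩
    rw [mul_div_assoc', hxy, mul_div_cancel_left₀ _ hq]
  · rintro ⟨x, hx, rfl⟩
    exact ⟨q * x, H.natCast_mul_mem q hx, mul_left_comm _ _ _⟩

theorem mul_add_sq_add_mul_add_sq_mul_sum_erase {R ι : Type*} [CommRing R] [DecidableEq ι]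
    (a b x : R) (u : ι → R) {T : Finset ι} {i : ι} (hi : i ∈ T) :
    a * x + (a ^ 2 + b) * u i + a ^ 2 * ∑ j ∈ T.erase i, u j =
      a * (x + a * ∑ j ∈ T, u j) + b * u i := by
  rw [← add_sum_erase T u hi]
  ring

structure IsStepFunction {R M : Type*} [AddGroup R] [One M] [Zero M]
    (P H : AddSubgroup R) (c : M) (g : R → M) : Prop where
  eq_one : ∀ y ∈ P, g y = 1
  eq_const : ∀ y ∈ H, y ∉ P → g y = c
  eq_zero : ∀ y ∉ H, g y = 0

namespace IsStepFunction

variable {R M ι : Type*} [CommRing R] [CommMonoidWithZero M]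
  {P H : AddSubgroup R} {c : M} {g : R → M} {p q : ℕ}

theorem apply_eq_apply (hg : IsStepFunction P H c g) {y z : R} (hy : y ∈ H) (hz : z ∈ H)
    (h : y ∈ P ↔ z ∈ P) : g y = g z := by
  by_cases hyP : y ∈ P
  · rw [hg.eq_one _ hyP, hg.eq_one _ (h.1 hyP)]
  · rw [hg.eq_const _ hy hyP, hg.eq_const _ hz (mt h.2 hyP)]

theorem apply_add_of_mem (hg : IsStepFunction P H c g) (hPH : P ≤ H) {z : R} (hz : z ∈ P)
    (y : R) : g (y + z) = g y := by
  by_cases hy : y ∈ H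
  · exact hg.apply_eq_apply (H.add_mem hy (hPH hz)) hy (P.add_mem_cancel_right hz)
  · rw [hg.eq_zero _ hy, hg.eq_zero _ ((H.add_mem_cancel_right (hPH hz)).not.2 hy)]

theorem apply_natCast_mul (hg : IsStepFunction P H c g) (hqH : ∀ y, (q : R) * y ∈ H → y ∈ H)
    (hqP : ∀ y, (q : R) * y ∈ P ↔ y ∈ P) (y : R) : g (q * y) = g y := by
  by_cases hy : y ∈ H
  · exact hg.apply_eq_apply (H.natCast_mul_mem q hy) hy (hqP y)
  · rw [hg.eq_zero _ hy, hg.eq_zero _ (mt (hqH y) hy)]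

theorem apply_natCast_mul_add_natCast_mul (hg : IsStepFunction P H c g) (hPH : P ≤ H)
    (hpP : ∀ y ∈ H, (p : R) * y ∈ P) (hqH : ∀ y, (q : R) * y ∈ H → y ∈ H)
    (hqP : ∀ y, (q : R) * y ∈ P ↔ y ∈ P) {x : R} (hx : x ∈ H) (y : R) :
    g (p * x + q * y) = g y := by
  rw [add_comm, hg.apply_add_of_mem hPH (hpP x hx), hg.apply_natCast_mul hqH hqP]

theorem apply_add_natCast_mul_sum_mul_prod (hg : IsStepFunction P H c g) (hPH : P ≤ H)
    (hpP : ∀ y ∈ H, (p : R) * y ∈ P) (x : R) (T : Finset ι) (u : ι → R) :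
    g (x + p * ∑ j ∈ T, u j) * ∏ i ∈ T, g (u i) = g x * ∏ i ∈ T, g (u i) := by
  by_cases hu : ∀ i ∈ T, u i ∈ H
  · rw [hg.apply_add_of_mem hPH (hpP _ (H.sum_mem hu))]
  · obtain ⟨i, hi, hui⟩ := not_forall₂.1 hu
    rw [prod_eq_zero hi (hg.eq_zero _ hui), mul_zero, mul_zero]

theorem skitovichDarmois_lhs_eq [DecidableEq ι] (hg : IsStepFunction P H c g) (hPH : P ≤ H)
    (hpP : ∀ y ∈ H, (p : R) * y ∈ P) (hqH : ∀ y, (q : R) * y ∈ H → y ∈ H)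
    (hqP : ∀ y, (q : R) * y ∈ P ↔ y ∈ P) (x : R) (T : Finset ι) (u : ι → R) :
    g (x + p * ∑ j ∈ T, u j) *
        ∏ i ∈ T, g (p * x + ((p : R) ^ 2 + q) * u i + (p : R) ^ 2 * ∑ j ∈ T.erase i, u j) =
      g x * ∏ i ∈ T, g (u i) := by
  rw [← hg.apply_add_natCast_mul_sum_mul_prod hPH hpP x T u]
  by_cases hL : x + p * ∑ j ∈ T, u j ∈ H
  · refine congrArg _ (prod_congr rfl fun i hi => ?_)
    rw [mul_add_sq_add_mul_add_sq_mul_sum_erase _ _ _ _ hi,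
      hg.apply_natCast_mul_add_natCast_mul hPH hpP hqH hqP hL]
  · rw [hg.eq_zero _ hL, zero_mul, zero_mul]

theorem skitovichDarmois_rhs_eq [DecidableEq ι] (hg : IsStepFunction P H c g) (hPH : P ≤ H)
    (hpP : ∀ y ∈ H, (p : R) * y ∈ P) (hqH : ∀ y, (q : R) * y ∈ H → y ∈ H)
    (hqP : ∀ y, (q : R) * y ∈ P ↔ y ∈ P) (x : R) (T : Finset ι) (u : ι → R) :
    (g x * ∏ j ∈ T, g (p * u j)) *
        ∏ i ∈ T, (g (p * x) * g (((p : R) ^ 2 + q) * u i) *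
          ∏ j ∈ T.erase i, g ((p : R) ^ 2 * u j)) =
      g x * ∏ i ∈ T, g (u i) := by
  have hs : ∀ y, ((p : R) ^ 2 + q) * y = p * (p * y) + q * y := fun y => by ring
  have hpg : ∀ y ∈ H, g (p * y) = 1 := fun y hy => hg.eq_one _ (hpP y hy)
  by_cases hu : ∀ i ∈ T, u i ∈ H
  · have hfactor : ∀ i ∈ T, g (p * x) * g (((p : R) ^ 2 + q) * u i) *
        ∏ j ∈ T.erase i, g ((p : R) ^ 2 * u j) = g (p * x) * g (u i) := fun i hi => by
      rw [hs, hg.apply_natCast_mul_add_natCast_mul hPH hpP hqH hqP (H.natCast_mul_mem p (hu i hi)),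
        prod_eq_one fun j hj => by
          rw [sq, mul_assoc, hpg _ (H.natCast_mul_mem p (hu j (mem_of_mem_erase hj)))], mul_one]
    rw [prod_eq_one fun j hj => hpg _ (hu j hj), mul_one, prod_congr rfl hfactor]
    by_cases hx : x ∈ H
    · simp only [hpg x hx, one_mul]
    · simp only [hg.eq_zero x hx, zero_mul]
  · obtain ⟨i, hi, hui⟩ := not_forall₂.1 hu
    rw [show ∏ i ∈ T, g (u i) = 0 from prod_eq_zero hi (hg.eq_zero _ hui), mul_zero]
    by_cases hpu : (p : R) * u i ∈ H
    · refine mul_eq_zero_of_right _ (prod_eq_zero hi ?_)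
      rw [hs, hg.apply_natCast_mul_add_natCast_mul hPH hpP hqH hqP hpu, hg.eq_zero _ hui,
        mul_zero, zero_mul]
    · exact mul_eq_zero_of_left (mul_eq_zero_of_right _ (prod_eq_zero hi (hg.eq_zero _ hpu))) _

end IsStepFunction

theorem mem_of_natCast_mul_mem_of_mem_iff_div_pow {H : AddSubgroup ℚ} {q : ℕ} (hq : q ≠ 0)
    (hH : ∀ y : ℚ, y ∈ H ↔ ∃ (m : ℤ) (k : ℕ), y = (m : ℚ) / (q : ℚ) ^ k) (y : ℚ)
    (hy : (q : ℚ) * y ∈ H) : y ∈ H := by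
  obtain ⟨m, k, hmk⟩ := (hH _).1 hy
  refine (hH y).2 ⟨m, k + 1, ?_⟩
  rw [pow_succ, ← div_div, ← hmk]
  field_simp

/-- Let `p ≠ q` be primes, `H = {m/q^k : m ∈ ℤ, k ≥ 0} ⊆ ℚ`, `0 < c < 1` and
`s = p² + q`. The function `g` equal to `1` on `pH`, to `c` on `H \ pH`, and to `0`
off `H`, satisfies the Skitovich–Darmois equation corresponding to the linear forms
`L₁ = ξ₁ + pξ₂ + ⋯ + pξₙ` and `Lᵢ = pξ₁ + p²ξ₂ + ⋯ + sξᵢ + ⋯ + p²ξₙ`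
(`i = 2, …, n`) of `n ≥ 2` i.i.d. random variables with characteristic function `g`. -/
theorem SD_equation_for_solenoid_construction
    (p q : ℕ) (hq : q.Prime)
    (H : AddSubgroup ℚ)
    (hH : ∀ y : ℚ, y ∈ H ↔ ∃ (m : ℤ) (k : ℕ), y = (m : ℚ) / (q : ℚ) ^ k)
    (c : ℝ)
    (g : ℚ → ℂ)
    (hg1 : ∀ y ∈ H.map (AddMonoidHom.mulLeft (p : ℚ)), g y = 1)
    (hgc : ∀ y ∈ H, y ∉ H.map (AddMonoidHom.mulLeft (p : ℚ)) → g y = (c : ℂ))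
    (hg0 : ∀ y ∉ H, g y = 0)
    (n : ℕ) (hn : 2 ≤ n) :
    ∀ u : Fin n → ℚ,
      g (u ⟨0, by omega⟩ + (p : ℚ) * ∑ j ∈ Finset.univ.erase ⟨0, by omega⟩, u j) *
        ∏ i ∈ Finset.univ.erase ⟨0, by omega⟩,
          g ((p : ℚ) * u ⟨0, by omega⟩ + ((p : ℚ) ^ 2 + (q : ℚ)) * u i +
            (p : ℚ) ^ 2 * ∑ j ∈ (Finset.univ.erase ⟨0, by omega⟩).erase i, u j) =
      (g (u ⟨0, by omega⟩) * ∏ j ∈ Finset.univ.erase ⟨0, by omega⟩, g ((p : ℚ) * u j)) *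
        ∏ i ∈ Finset.univ.erase ⟨0, by omega⟩,
          (g ((p : ℚ) * u ⟨0, by omega⟩) * g (((p : ℚ) ^ 2 + (q : ℚ)) * u i) *
            ∏ j ∈ (Finset.univ.erase ⟨0, by omega⟩).erase i, g ((p : ℚ) ^ 2 * u j)) := by
  intro u
  have hg : IsStepFunction (H.map (AddMonoidHom.mulLeft (p : ℚ))) H (c : ℂ) g := ⟨hg1, hgc, hg0⟩
  have hPH := H.map_mulLeft_natCast_le p
  have hpP : ∀ y ∈ H, (p : ℚ) * y ∈ H.map (AddMonoidHom.mulLeft (p : ℚ)) :=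
    fun y hy => AddSubgroup.mem_map_of_mem _ hy
  have hqH := mem_of_natCast_mul_mem_of_mem_iff_div_pow hq.ne_zero hH
  have hqP := H.natCast_mul_mem_map_mulLeft_iff p (Nat.cast_ne_zero.2 hq.ne_zero) hqH
  exact (hg.skitovichDarmois_lhs_eq hPH hpP hqH hqP _ _ u).trans
    (hg.skitovichDarmois_rhs_eq hPH hpP hqH hqP _ _ u).symm
end

section
/- Let Y be a subgroup of ℚ and let f_1, f_2, f_3 be normalized positive definite functions on Y satisfying equation (S-D T): f_1(u_1+u_2+u_3)·f_2(u_1−u_2−u_3)·f_3(u_1+u_2−u_3) = f_1(u_1)f_1(u_2)f_1(u_3)·f_2(u_1)f_2(−u_2)f_2(−u_3)·f_3(u_1)f_3(u_2)f_3(−u_3) for all u_1, u_2, u_3 ∈ Y. Then the set N = {y ∈ Y : f_1(y)·f_2(y)·f_3(y) ≠ 0} is a subgroup of Y, and moreover for every y ∈ Y, if 2y ∈ N then y ∈ N. -/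
/-! Positive definiteness gives `f (-x) = conj (f x)`, so the nonvanishing set `N` is closed under
negation. Specialising (S-D T) at `(x, y, 0)` and `(x, 0, -y)` expresses `f₁ (x + y) f₃ (x + y)`
and `f₂ (x + y)` as factors of products of values at `x`, `±y` and `0`, which gives closure under
addition. At `(y, y, 0)` it writes `f₁ (2y) f₂ 0 f₃ (2y)` as a product with factors
`f₁ y`, `f₂ y`, `f₃ y`, so `2y ∈ N` forces `y ∈ N`. -/

def nonvanishingSet {Y : Type*} (f₁ f₂ f₃ : Y → ℂ) : Set Y := {y | f₁ y * f₂ y * f₃ y ≠ 0}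

theorem mem_nonvanishingSet {Y : Type*} {f₁ f₂ f₃ : Y → ℂ} {y : Y} :
    y ∈ nonvanishingSet f₁ f₂ f₃ ↔ f₁ y ≠ 0 ∧ f₂ y ≠ 0 ∧ f₃ y ≠ 0 := by
  simp [nonvanishingSet, and_assoc]

variable {Y : Type*} [AddCommGroup Y] {f₁ f₂ f₃ : Y → ℂ}

theorem IsPosDefFn.map_neg_s15 {f : Y → ℂ} (h : IsPosDefFn f) (x : Y) :
    f (-x) = starRingEnd ℂ (f x) := by
  have h₀ := (h 1 ![0] ![1]).2
  have h₁ := (h 2 ![x, 0] ![1, 1]).2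
  have h₂ := (h 2 ![x, 0] ![Complex.I, 1]).2
  simp [Fin.sum_univ_two, Complex.ext_iff] at h₀ h₁ h₂ ⊢
  constructor <;> linarith

theorem neg_mem_nonvanishingSet (hpd₁ : IsPosDefFn f₁) (hpd₂ : IsPosDefFn f₂)
    (hpd₃ : IsPosDefFn f₃) {y : Y} (hy : y ∈ nonvanishingSet f₁ f₂ f₃) :
    -y ∈ nonvanishingSet f₁ f₂ f₃ := by
  simpa [mem_nonvanishingSet, hpd₁.map_neg_s15, hpd₂.map_neg_s15, hpd₃.map_neg_s15] using hy

theorem SDTEq.add_mem_nonvanishingSet (heq : SDTEq f₁ f₂ f₃)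
    (h0 : 0 ∈ nonvanishingSet f₁ f₂ f₃) {x y : Y} (hx : x ∈ nonvanishingSet f₁ f₂ f₃)
    (hy : y ∈ nonvanishingSet f₁ f₂ f₃) (hy' : -y ∈ nonvanishingSet f₁ f₂ f₃) :
    x + y ∈ nonvanishingSet f₁ f₂ f₃ := by
  rw [mem_nonvanishingSet] at *
  have e₁ : f₁ (x + y) * f₂ (x - y) * f₃ (x + y) =
      f₁ x * f₁ y * f₁ 0 * (f₂ x * f₂ (-y) * f₂ 0) * (f₃ x * f₃ y * f₃ 0) := by
    simpa using heq x y 0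
  have e₂ : f₁ (x - y) * f₂ (x + y) * f₃ (x + y) =
      f₁ x * f₁ 0 * f₁ (-y) * (f₂ x * f₂ 0 * f₂ y) * (f₃ x * f₃ 0 * f₃ y) := by
    simpa [sub_eq_add_neg] using heq x 0 (-y)
  have n₁ : f₁ (x + y) * f₂ (x - y) * f₃ (x + y) ≠ 0 := by simp [e₁, hx, hy, hy', h0]
  have n₂ : f₁ (x - y) * f₂ (x + y) * f₃ (x + y) ≠ 0 := by simp [e₂, hx, hy, hy', h0]
  exact ⟨left_ne_zero_of_mul (left_ne_zero_of_mul n₁),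
    right_ne_zero_of_mul (left_ne_zero_of_mul n₂), right_ne_zero_of_mul n₁⟩

theorem SDTEq.mem_nonvanishingSet_of_two_nsmul_mem (heq : SDTEq f₁ f₂ f₃)
    (h0 : 0 ∈ nonvanishingSet f₁ f₂ f₃) {y : Y}
    (hy : 2 • y ∈ nonvanishingSet f₁ f₂ f₃) : y ∈ nonvanishingSet f₁ f₂ f₃ := by
  rw [mem_nonvanishingSet, two_nsmul] at *
  have e : f₁ (y + y) * f₂ 0 * f₃ (y + y) =
      f₁ y * f₁ y * f₁ 0 * (f₂ y * f₂ (-y) * f₂ 0) * (f₃ y * f₃ y * f₃ 0) := by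
    simpa using heq y y 0
  have n : f₁ (y + y) * f₂ 0 * f₃ (y + y) ≠ 0 := by simp [hy, h0]
  simp only [e, ne_eq, mul_eq_zero, not_or] at n
  exact ⟨n.1.1.1.1, n.1.2.1.1, n.2.1.1⟩

def SDTEq.nonvanishingAddSubgroup (heq : SDTEq f₁ f₂ f₃) (hpd₁ : IsPosDefFn f₁)
    (hpd₂ : IsPosDefFn f₂) (hpd₃ : IsPosDefFn f₃) (h0 : 0 ∈ nonvanishingSet f₁ f₂ f₃) :
    AddSubgroup Y where
  carrier := nonvanishingSet f₁ f₂ f₃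
  zero_mem' := h0
  add_mem' hx hy :=
    heq.add_mem_nonvanishingSet h0 hx hy (neg_mem_nonvanishingSet hpd₁ hpd₂ hpd₃ hy)
  neg_mem' := neg_mem_nonvanishingSet hpd₁ hpd₂ hpd₃

/-- Let `Y` be a subgroup of `ℚ` and `f₁, f₂, f₃` normalized positive definite
functions on `Y` satisfying equation (S-D T). Then
`N = {y : f₁(y)f₂(y)f₃(y) ≠ 0}` is a subgroup of `Y`, and `2y ∈ N` implies
`y ∈ N`. -/
theorem SDT_nonvanishing_set_is_subgroup
    (Y : AddSubgroup ℚ)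
    (f₁ f₂ f₃ : ↥Y → ℂ)
    (hpd₁ : IsPosDefFn f₁) (hpd₂ : IsPosDefFn f₂) (hpd₃ : IsPosDefFn f₃)
    (hn₁ : f₁ 0 = 1) (hn₂ : f₂ 0 = 1) (hn₃ : f₃ 0 = 1)
    (heq : SDTEq f₁ f₂ f₃) :
    (∃ N : AddSubgroup ↥Y, (N : Set ↥Y) = {y : ↥Y | f₁ y * f₂ y * f₃ y ≠ 0}) ∧
      ∀ y : ↥Y, f₁ (2 • y) * f₂ (2 • y) * f₃ (2 • y) ≠ 0 →
        f₁ y * f₂ y * f₃ y ≠ 0 := by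
  have h0 : (0 : ↥Y) ∈ nonvanishingSet f₁ f₂ f₃ := by
    simp [mem_nonvanishingSet, hn₁, hn₂, hn₃]
  exact ⟨⟨heq.nonvanishingAddSubgroup hpd₁ hpd₂ hpd₃ h0, rfl⟩,
    fun _ => heq.mem_nonvanishingSet_of_two_nsmul_mem h0⟩
end

section
/- Let Y be a nonzero subgroup of ℚ such that pY ≠ Y for every prime p. Then the only automorphisms of the additive group Y are the identity map y ↦ y and the inversion y ↦ −y. (Dually, if X is an a-adic solenoid on which no map x ↦ px, p prime, is a topological automorphism, then Aut(X) = {I, −I}.) -/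
/-!
Two elements of a subgroup `Y ≤ ℚ` have a common nonzero integer multiple, so every additive map
from `Y` into a `ℚ`-vector space is multiplication by a fixed vector. An automorphism of `Y` is
therefore `y ↦ q * y` with `q • Y ⊆ Y` and `q⁻¹ • Y ⊆ Y`. By Bézout, `q • Y ⊆ Y` makes `Y`
divisible by the denominator of `q`, and `q⁻¹ • Y ⊆ Y` makes it divisible by `|num q|`; a prime
factor `p` of either would give `p • Y = Y`. Hence `q = ±1`.
-/

namespace AddSubgroup

variable {Y : AddSubgroup ℚ}

theorem smul_apply_eq_smul_apply {M : Type*} [AddCommGroup M] [Module ℚ M] (f : Y →+ M)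
    (x y : Y) : (y : ℚ) • f x = (x : ℚ) • f y := by
  set a := (x : ℚ).num; set b := (x : ℚ).den; set c := (y : ℚ).num; set d := (y : ℚ).den
  have hx : (x : ℚ) * b = a := Rat.mul_den_eq_num _
  have hy : (y : ℚ) * d = c := Rat.mul_den_eq_num _
  -- both sides of `hxy` are `a * c`
  have hxy : (b * c : ℤ) • x = (a * d : ℤ) • y := by
    ext; simp only [coe_zsmul, zsmul_eq_mul]; push_cast; rw [← hx, ← hy]; ring
  have hf := congrArg f hxy
  simp only [map_zsmul, ← Int.cast_smul_eq_zsmul ℚ] at hf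
  have hbd : ((b * d : ℕ) : ℚ) ≠ 0 := by positivity
  apply smul_right_injective M hbd
  simp only [smul_smul]
  convert hf using 2 <;> push_cast
  · linear_combination (b : ℚ) * hy
  · linear_combination (d : ℚ) * hx

theorem exists_apply_eq_smul {M : Type*} [AddCommGroup M] [Module ℚ M] (f : Y →+ M) :
    ∃ m : M, ∀ y : Y, f y = (y : ℚ) • m := by
  by_cases hY : Y = ⊥
  · subst hY
    exact ⟨0, fun y => by rw [smul_zero, Subsingleton.elim y 0, map_zero]⟩
  obtain ⟨y₀, hy₀⟩ := ne_bot_iff_exists_ne_zero.mp hY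
  refine ⟨(y₀ : ℚ)⁻¹ • f y₀, fun y => ?_⟩
  rw [smul_smul, ← div_eq_mul_inv, div_eq_inv_mul, mul_smul, smul_apply_eq_smul_apply f y₀ y,
    inv_smul_smul₀ (Subtype.coe_injective.ne hy₀)]

theorem div_mem_of_dvd {m n : ℕ} (hn : n ≠ 0) (hmn : m ∣ n) (h : ∀ y ∈ Y, y / n ∈ Y) :
    ∀ y ∈ Y, y / m ∈ Y := by
  obtain ⟨k, rfl⟩ := hmn
  intro y hy
  have hk : (k : ℚ) ≠ 0 := by exact_mod_cast right_ne_zero_of_mul hn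
  convert Y.nsmul_mem (h y hy) k using 1
  rw [nsmul_eq_mul]; push_cast; field_simp

theorem div_den_mem_of_mul_mem {q : ℚ} (h : ∀ y ∈ Y, q * y ∈ Y) : ∀ y ∈ Y, y / q.den ∈ Y := by
  intro y hy
  obtain ⟨u, v, huv⟩ := Rat.isCoprime_num_den q
  have huv' : (u : ℚ) * q.num + v * q.den = 1 := by exact_mod_cast huv
  have hq : q * q.den = q.num := Rat.mul_den_eq_num q
  have hd : (q.den : ℚ) ≠ 0 := by positivity
  have hkey : y / q.den = u • (q * y) + v • y := by
    rw [zsmul_eq_mul, zsmul_eq_mul, div_eq_iff hd]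
    linear_combination (-y) * huv' - (u * y) * hq
  rw [hkey]
  exact Y.add_mem (Y.zsmul_mem (h y hy) u) (Y.zsmul_mem hy v)

theorem map_mulLeft_eq_self_of_div_mem {n : ℕ} (hn : n ≠ 0) (h : ∀ y ∈ Y, y / n ∈ Y) :
    Y.map (AddMonoidHom.mulLeft (n : ℚ)) = Y := by
  refine le_antisymm ?_ fun y hy => ⟨y / n, h y hy, ?_⟩
  · rintro _ ⟨y, hy, rfl⟩
    simpa using Y.nsmul_mem hy n
  · simp [mul_div_cancel₀ y (Nat.cast_ne_zero.mpr hn)]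

theorem eq_one_of_div_mem (hprime : ∀ p : ℕ, p.Prime → Y.map (AddMonoidHom.mulLeft (p : ℚ)) ≠ Y)
    {n : ℕ} (hn : n ≠ 0) (h : ∀ y ∈ Y, y / n ∈ Y) : n = 1 := by
  by_contra hn1
  obtain ⟨p, hp, hpn⟩ := Nat.exists_prime_and_dvd hn1
  exact hprime p hp (map_mulLeft_eq_self_of_div_mem hp.ne_zero (div_mem_of_dvd hn hpn h))

end AddSubgroup

theorem Rat.eq_one_or_eq_neg_one_of_den_eq_one_of_natAbs_num_eq_one {q : ℚ} (hden : q.den = 1)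
    (hnum : q.num.natAbs = 1) : q = 1 ∨ q = -1 := by
  rw [← Rat.coe_int_num_of_den_eq_one hden]
  rcases Int.natAbs_eq_iff.mp hnum with h | h <;> simp [h]

/-- Let `Y` be a nonzero subgroup of `ℚ` such that `pY ≠ Y` for every prime `p`.
Then the only automorphisms of the group `Y` are the identity `y ↦ y` and the
inversion `y ↦ −y` (dually, `Aut(Σ_a) = {I, −I}` for the corresponding
`a`-adic solenoid). -/
theorem aut_eq_pm_id_of_no_prime_divisibility
    (Y : AddSubgroup ℚ) (hY : Y ≠ ⊥)
    (hprime : ∀ p : ℕ, p.Prime → Y.map (AddMonoidHom.mulLeft (p : ℚ)) ≠ Y)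
    (e : ↥Y ≃+ ↥Y) :
    (∀ y : ↥Y, e y = y) ∨ (∀ y : ↥Y, e y = -y) := by
  obtain ⟨q, hq⟩ := Y.exists_apply_eq_smul (Y.subtype.comp e.toAddMonoidHom)
  obtain ⟨q', hq'⟩ := Y.exists_apply_eq_smul (Y.subtype.comp e.symm.toAddMonoidHom)
  simp only [AddMonoidHom.coe_comp, AddSubgroup.coe_subtype, Function.comp_apply,
    AddEquiv.coe_toAddMonoidHom, smul_eq_mul] at hq hq'
  obtain ⟨y₀, hy₀⟩ := AddSubgroup.ne_bot_iff_exists_ne_zero.mp hY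
  have hqq' : q * q' = 1 := by
    have := hq' (e y₀)
    rw [e.symm_apply_apply, hq, mul_assoc] at this
    exact (mul_eq_left₀ (Subtype.coe_injective.ne hy₀)).mp this.symm
  have hmem {r : ℚ} (f : Y ≃+ Y) (hf : ∀ y : Y, (f y : ℚ) = y * r) : ∀ y ∈ Y, r * y ∈ Y :=
    fun y hy => by simpa [mul_comm, hf] using (f ⟨y, hy⟩).2
  have hden := Y.eq_one_of_div_mem hprime q.den_nz (Y.div_den_mem_of_mul_mem (hmem e hq))
  have hnum := Y.eq_one_of_div_mem hprime q'.den_nz (Y.div_den_mem_of_mul_mem (hmem e.symm hq'))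
  rw [eq_inv_of_mul_eq_one_right hqq', Rat.den_inv_of_ne_zero (left_ne_zero_of_mul_eq_one hqq')]
    at hnum
  rcases Rat.eq_one_or_eq_neg_one_of_den_eq_one_of_natAbs_num_eq_one hden hnum with rfl | rfl
  · exact .inl fun y => Subtype.ext (by simp [hq])
  · exact .inr fun y => Subtype.ext (by simp [hq])
end

section
/- Let Y be a subgroup of ℚ and let f_1, f_2, f_3 be normalized positive definite functions on Y satisfying equation (S-D T): f_1(u_1+u_2+u_3)·f_2(u_1−u_2−u_3)·f_3(u_1+u_2−u_3) = f_1(u_1)f_1(u_2)f_1(u_3)·f_2(u_1)f_2(−u_2)f_2(−u_3)·f_3(u_1)f_3(u_2)f_3(−u_3) for all u_1, u_2, u_3 ∈ Y. Suppose that for every y ∈ Y with y ≠ 0 at least one of f_1(y), f_2(y), f_3(y) is zero (i.e. N = {y : f_1(y)f_2(y)f_3(y) ≠ 0} = {0}). Then f_i(2y) = 0 for every y ∈ Y with y ≠ 0 and every i = 1, 2, 3. -/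
/-! Substituting `(y, 0, y)`, `(y, -y, 0)` and `(0, y, -y)` into (S-D T) expresses each
`fᵢ(2y)` as a multiple of `f₁(y) f₂(y) f₃(y)`, which vanishes for `y ≠ 0` when `N = {0}`. -/

namespace SDTEq

variable {Y : Type*} [AddCommGroup Y] {f₁ f₂ f₃ : Y → ℂ}

theorem apply_two_nsmul_fst (h : SDTEq f₁ f₂ f₃) (hn₁ : f₁ 0 = 1) (hn₂ : f₂ 0 = 1)
    (hn₃ : f₃ 0 = 1) (y : Y) :
    f₁ (2 • y) = f₁ y * f₂ y * f₃ y * (f₁ y * f₂ (-y) * f₃ (-y)) := by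
  have e := h y 0 y
  simp only [add_zero, sub_zero, sub_self, neg_zero, hn₁, hn₂, hn₃, mul_one] at e
  rw [two_smul, e]
  ring

theorem apply_two_nsmul_snd (h : SDTEq f₁ f₂ f₃) (hn₁ : f₁ 0 = 1) (hn₂ : f₂ 0 = 1)
    (hn₃ : f₃ 0 = 1) (y : Y) :
    f₂ (2 • y) = f₁ y * f₂ y * f₃ y * (f₁ (-y) * f₂ y * f₃ (-y)) := by
  have e := h y (-y) 0
  simp only [add_zero, sub_zero, sub_neg_eq_add, add_neg_cancel, neg_zero, neg_neg, hn₁, hn₂,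
    hn₃, mul_one, one_mul] at e
  rw [two_smul, e]
  ring

theorem apply_two_nsmul_thd (h : SDTEq f₁ f₂ f₃) (hn₁ : f₁ 0 = 1) (hn₂ : f₂ 0 = 1)
    (hn₃ : f₃ 0 = 1) (y : Y) :
    f₃ (2 • y) = f₁ y * f₂ y * f₃ y * (f₁ (-y) * f₂ (-y) * f₃ y) := by
  have e := h 0 y (-y)
  simp only [zero_add, zero_sub, sub_neg_eq_add, add_neg_cancel, neg_add_cancel, neg_neg, hn₁,
    hn₂, hn₃, mul_one, one_mul] at e
  rw [two_smul, e]
  ring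

end SDTEq

theorem SDT_vanish_on_doubles_of_N_eq_zero_general
    (Y : AddSubgroup ℚ)
    (f₁ f₂ f₃ : ↥Y → ℂ)
    (hn₁ : f₁ 0 = 1) (hn₂ : f₂ 0 = 1) (hn₃ : f₃ 0 = 1)
    (heq : SDTEq f₁ f₂ f₃)
    (hN : ∀ y : ↥Y, y ≠ 0 → f₁ y * f₂ y * f₃ y = 0) :
    ∀ y : ↥Y, y ≠ 0 → f₁ (2 • y) = 0 ∧ f₂ (2 • y) = 0 ∧ f₃ (2 • y) = 0 := by
  intro y hy
  have hy₀ := hN y hy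
  refine ⟨?_, ?_, ?_⟩
  · rw [heq.apply_two_nsmul_fst hn₁ hn₂ hn₃, hy₀, zero_mul]
  · rw [heq.apply_two_nsmul_snd hn₁ hn₂ hn₃, hy₀, zero_mul]
  · rw [heq.apply_two_nsmul_thd hn₁ hn₂ hn₃, hy₀, zero_mul]

/-- Let `Y` be a subgroup of `ℚ` and `f₁, f₂, f₃` normalized positive definite
functions on `Y` satisfying (S-D T). If for every nonzero `y` at least one of
`f₁(y), f₂(y), f₃(y)` vanishes (i.e. `N = {0}`), then `fᵢ(2y) = 0` for every
nonzero `y` and every `i = 1, 2, 3`. -/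
theorem SDT_vanish_on_doubles_of_N_eq_zero
    (Y : AddSubgroup ℚ)
    (f₁ f₂ f₃ : ↥Y → ℂ)
    (hpd₁ : IsPosDefFn f₁) (hpd₂ : IsPosDefFn f₂) (hpd₃ : IsPosDefFn f₃)
    (hn₁ : f₁ 0 = 1) (hn₂ : f₂ 0 = 1) (hn₃ : f₃ 0 = 1)
    (heq : SDTEq f₁ f₂ f₃)
    (hN : ∀ y : ↥Y, y ≠ 0 → f₁ y * f₂ y * f₃ y = 0) :
    ∀ y : ↥Y, y ≠ 0 → f₁ (2 • y) = 0 ∧ f₂ (2 • y) = 0 ∧ f₃ (2 • y) = 0 :=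
  SDT_vanish_on_doubles_of_N_eq_zero_general Y f₁ f₂ f₃ hn₁ hn₂ hn₃ heq hN
end
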